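/- arXiv:2306.09876 — 10 statements merged into one kernel-verified Lean document; each statement's English description precedes it below -/
import Mathlib

section
/- Let A = {a_1,...,a_p} and B = {b_1,...,b_q} minimally generate numerical semigroups ⟨A⟩ and ⟨B⟩, and let k_1 ∈ ⟨B⟩\B, k_2 ∈ ⟨A⟩\A with gcd(k_1,k_2)=1. Then the Frobenius number of the numerical semigroup ⟨C⟩ generated by C = k_1A ∪ k_2B is F_C = k_1·F_A + k_2·F_B + k_1·k_2. -/
def NS (A : Set ℕ) : AddSubmonoid ℕ := AddSubmonoid.closure A

def IsFrobenius (S : AddSubmonoid ℕ) (F : ℕ) : Prop :=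
  F ∉ S ∧ ∀ m : ℕ, F < m → m ∈ S

def MinimallyGenerates (A : Set ℕ) : Prop :=
  ∀ a ∈ A, a ∉ AddSubmonoid.closure (A \ {a})

def glueGens (A B : Set ℕ) (k1 k2 : ℕ) : Set ℕ :=
  (fun a => k1 * a) '' A ∪ (fun b => k2 * b) '' B

/-!
Every element of the gluing is `k₁x + k₂y` with `x ∈ ⟨A⟩`, `y ∈ ⟨B⟩`, and since `k₂ ∈ ⟨A⟩`,
`k₁ ∈ ⟨B⟩` such a representation can be shifted along `(x, y) ↦ (x + k₂s, y - k₁s)`.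
A representation `k₁x + k₂y = k₁F_A + k₂F_B + k₁k₂` with `x ≤ F_A` would shift to one with
first coordinate `F_A`, i.e. put `F_A` in `⟨A⟩`; symmetrically `y > F_B`, and then
`k₁(x - F_A) + k₂(y - F_B) = k₁k₂` with both coefficients positive, which coprimality forbids.
Conversely, above `k₁F_A + k₂F_B + k₁k₂` one subtracts `k₁(F_A + 1) + k₂(F_B + 1)` and is left
with a number above `k₁k₂ - k₁ - k₂`, which the Chicken McNugget theorem writes as `k₁u + k₂v`.
-/

lemma mem_NS_glueGens_iff (A B : Set ℕ) (k1 k2 n : ℕ) :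
    n ∈ NS (glueGens A B k1 k2) ↔ ∃ x ∈ NS A, ∃ y ∈ NS B, k1 * x + k2 * y = n := by
  have hA : (fun a => k1 * a) '' A = AddMonoidHom.mulLeft k1 '' A := rfl
  have hB : (fun b => k2 * b) '' B = AddMonoidHom.mulLeft k2 '' B := rfl
  rw [NS, glueGens, AddSubmonoid.closure_union, hA, hB, ← AddMonoidHom.map_mclosure,
    ← AddMonoidHom.map_mclosure, AddSubmonoid.mem_sup]
  simp only [AddSubmonoid.mem_map, AddMonoidHom.coe_mulLeft]
  constructor
  · rintro ⟨_, ⟨x, hx, rfl⟩, _, ⟨y, hy, rfl⟩, rfl⟩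
    exact ⟨x, hx, y, hy, rfl⟩
  · rintro ⟨x, hx, y, hy, rfl⟩
    exact ⟨_, ⟨x, hx, rfl⟩, _, ⟨y, hy, rfl⟩, rfl⟩

lemma AddSubmonoid.add_mul_mem_nat {S : AddSubmonoid ℕ} {x k : ℕ} (hx : x ∈ S) (hk : k ∈ S)
    (s : ℕ) : x + k * s ∈ S :=
  S.add_mem hx (by simpa [mul_comm] using S.nsmul_mem hk s)

lemma AddSubmonoid.ne_one_of_mem_of_notMem {S : AddSubmonoid ℕ} {k F : ℕ} (hk : k ∈ S)
    (hF : F ∉ S) : k ≠ 1 := by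
  rintro rfl
  exact hF (by simpa using S.nsmul_mem hk F)

lemma Nat.exists_eq_add_mul_of_mul_add_mul_eq {k1 k2 x y x' y' : ℕ} (hcop : k1.Coprime k2)
    (hle : x ≤ x') (h : k1 * x + k2 * y = k1 * x' + k2 * y') : ∃ s, x' = x + k2 * s := by
  have hdvd : k2 ∣ k1 * (x' - x) := ⟨y - y', by rw [Nat.mul_sub, Nat.mul_sub]; omega⟩
  obtain ⟨s, hs⟩ := hcop.symm.dvd_of_dvd_mul_left hdvd
  exact ⟨s, by omega⟩

lemma lt_of_mul_add_mul_eq_of_notMem {S : AddSubmonoid ℕ} {F k1 k2 x y y' : ℕ}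
    (hcop : k1.Coprime k2) (hF : F ∉ S) (hx : x ∈ S) (hk2 : k2 ∈ S)
    (h : k1 * x + k2 * y = k1 * F + k2 * y') : F < x := by
  by_contra! hle
  obtain ⟨s, rfl⟩ := Nat.exists_eq_add_mul_of_mul_add_mul_eq hcop hle h
  exact hF (AddSubmonoid.add_mul_mem_nat hx hk2 s)

lemma Nat.exists_mul_add_mul_eq_of_lt {k1 k2 n : ℕ} (hcop : k1.Coprime k2) (hk1 : 1 < k1)
    (hk2 : 1 < k2) (hn : k1 * k2 < n + k1 + k2) : ∃ u v, k1 * u + k2 * v = n := by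
  have hmem := (frobeniusNumber_iff.mp (frobeniusNumber_pair hcop hk1 hk2)).2 n
    (by have := Nat.add_le_mul hk1 hk2; omega)
  obtain ⟨u, v, huv⟩ := (AddSubmonoid.mem_closure_pair k1 k2 n).mp hmem
  exact ⟨u, v, by simpa [mul_comm] using huv⟩

section Gluing

variable {A B : Set ℕ} {FA FB k1 k2 : ℕ}

lemma notMem_NS_glueGens (hFA : FA ∉ NS A) (hFB : FB ∉ NS B) (hk1B : k1 ∈ NS B)
    (hk2A : k2 ∈ NS A) (hcop : k1.Coprime k2) :
    k1 * FA + k2 * FB + k1 * k2 ∉ NS (glueGens A B k1 k2) := by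
  rw [mem_NS_glueGens_iff]
  rintro ⟨x, hx, y, hy, hxy⟩
  have hxFA : FA < x :=
    lt_of_mul_add_mul_eq_of_notMem (y' := FB + k1) hcop hFA hx hk2A (by rw [hxy]; ring)
  have hyFB : FB < y :=
    lt_of_mul_add_mul_eq_of_notMem (y' := FA + k2) hcop.symm hFB hy hk1B
      (by rw [add_comm, hxy]; ring)
  obtain ⟨a, rfl⟩ := Nat.exists_eq_add_of_lt hxFA
  obtain ⟨b, rfl⟩ := Nat.exists_eq_add_of_lt hyFB
  exact hcop.mul_add_mul_ne_mul (Nat.succ_ne_zero a) (Nat.succ_ne_zero b) (by linarith)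

lemma mem_NS_glueGens_of_lt (hFA : ∀ m, FA < m → m ∈ NS A) (hFB : ∀ m, FB < m → m ∈ NS B)
    (hcop : k1.Coprime k2) (hk1 : 1 < k1) (hk2 : 1 < k2) {m : ℕ}
    (hm : k1 * FA + k2 * FB + k1 * k2 < m) : m ∈ NS (glueGens A B k1 k2) := by
  have hFA1 : k1 * (FA + 1) = k1 * FA + k1 := by ring
  have hFB1 : k2 * (FB + 1) = k2 * FB + k2 := by ring
  have hk12 : k1 + k2 ≤ k1 * k2 := Nat.add_le_mul hk1 hk2
  obtain ⟨u, v, huv⟩ := Nat.exists_mul_add_mul_eq_of_lt (n := m - k1 * (FA + 1) - k2 * (FB + 1))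
    hcop hk1 hk2 (by omega)
  rw [mem_NS_glueGens_iff]
  refine ⟨FA + 1 + u, hFA _ (by omega), FB + 1 + v, hFB _ (by omega), ?_⟩
  have hsplit : k1 * (FA + 1 + u) + k2 * (FB + 1 + v) =
      k1 * (FA + 1) + k2 * (FB + 1) + (k1 * u + k2 * v) := by ring
  rw [hsplit, huv]
  omega

end Gluing

theorem frobenius_of_gluing_general (A B : Finset ℕ) (FA FB k1 k2 : ℕ)
    (hFA : IsFrobenius (NS (A : Set ℕ)) FA) (hFB : IsFrobenius (NS (B : Set ℕ)) FB)
    (hk1B : k1 ∈ NS (B : Set ℕ))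
    (hk2A : k2 ∈ NS (A : Set ℕ))
    (hcop : Nat.Coprime k1 k2) :
    IsFrobenius (NS (glueGens (A : Set ℕ) (B : Set ℕ) k1 k2)) (k1 * FA + k2 * FB + k1 * k2) := by
  have hk1_ne_one : k1 ≠ 1 := AddSubmonoid.ne_one_of_mem_of_notMem hk1B hFB.1
  have hk2_ne_one : k2 ≠ 1 := AddSubmonoid.ne_one_of_mem_of_notMem hk2A hFA.1
  have hk1_ne_zero : k1 ≠ 0 := by
    rintro rfl
    exact hk2_ne_one ((Nat.coprime_zero_left k2).mp hcop)
  have hk2_ne_zero : k2 ≠ 0 := by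
    rintro rfl
    exact hk1_ne_one ((Nat.coprime_zero_right k1).mp hcop)
  exact ⟨notMem_NS_glueGens hFA.1 hFB.1 hk1B hk2A hcop,
    fun m hm => mem_NS_glueGens_of_lt hFA.2 hFB.2 hcop (by omega) (by omega) hm⟩

/-- The Frobenius number of the gluing is `k₁F_A + k₂F_B + k₁k₂`. -/
theorem frobenius_of_gluing (A B : Finset ℕ) (FA FB k1 k2 : ℕ)
    (hAmin : MinimallyGenerates (A : Set ℕ)) (hBmin : MinimallyGenerates (B : Set ℕ))
    (hFA : IsFrobenius (NS (A : Set ℕ)) FA) (hFB : IsFrobenius (NS (B : Set ℕ)) FB)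
    (hk1B : k1 ∈ NS (B : Set ℕ)) (hk1nB : k1 ∉ B)
    (hk2A : k2 ∈ NS (A : Set ℕ)) (hk2nA : k2 ∉ A)
    (hcop : Nat.Coprime k1 k2) :
    IsFrobenius (NS (glueGens (A : Set ℕ) (B : Set ℕ) k1 k2)) (k1 * FA + k2 * FB + k1 * k2) :=
  frobenius_of_gluing_general A B FA FB k1 k2 hFA hFB hk1B hk2A hcop
end

section
/- With notation as in the gluing construction, every integer strictly larger than k_1·F_A + k_2·F_B + k_1·k_2 belongs to the semigroup ⟨C⟩ generated by k_1A ∪ k_2B. -/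
/-!
Since `k₁` is invertible mod `k₂`, some `x` in the window `(F_A, F_A + k₂]` has
`k₁x ≡ m [MOD k₂]`; for `m > k₁F_A + k₂F_B + k₁k₂` this gives `m = k₁x + k₂y` with `y > F_B`.
Then `x ∈ ⟨A⟩` and `y ∈ ⟨B⟩`, so `k₁x + k₂y ∈ ⟨k₁A⟩ + ⟨k₂B⟩ ⊆ ⟨C⟩`.
-/

lemma mul_mem_NS_image {A : Set ℕ} {x : ℕ} (k : ℕ) (hx : x ∈ NS A) :
    k * x ∈ NS ((fun a => k * a) '' A) := by
  have hmap := AddSubmonoid.mem_map_of_mem (AddMonoidHom.mulLeft k) hx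
  rwa [NS, AddMonoidHom.map_mclosure] at hmap

lemma mul_add_mul_mem_NS_glueGens {A B : Set ℕ} {x y : ℕ} (k1 k2 : ℕ)
    (hx : x ∈ NS A) (hy : y ∈ NS B) : k1 * x + k2 * y ∈ NS (glueGens A B k1 k2) :=
  add_mem (AddSubmonoid.closure_mono Set.subset_union_left (mul_mem_NS_image k1 hx))
    (AddSubmonoid.closure_mono Set.subset_union_right (mul_mem_NS_image k2 hy))

lemma ZMod.exists_natCast_eq_of_le_of_lt (n c : ℕ) [NeZero n] (r : ZMod n) :
    ∃ x : ℕ, c ≤ x ∧ x < c + n ∧ (x : ZMod n) = r :=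
  ⟨c + (r - c).val, by omega, by have := ZMod.val_lt (r - c : ZMod n); omega, by simp⟩

lemma Nat.exists_mul_modEq_of_coprime {a b : ℕ} (hab : a.Coprime b) [NeZero b] (c m : ℕ) :
    ∃ x : ℕ, c ≤ x ∧ x < c + b ∧ a * x ≡ m [MOD b] := by
  obtain ⟨x, hcx, hxc, hx⟩ :=
    ZMod.exists_natCast_eq_of_le_of_lt b c ((m : ZMod b) * (a : ZMod b)⁻¹)
  refine ⟨x, hcx, hxc, (ZMod.natCast_eq_natCast_iff _ _ _).mp ?_⟩
  rw [Nat.cast_mul, hx, mul_left_comm, ZMod.coe_mul_inv_eq_one a hab, mul_one]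

lemma Nat.exists_eq_mul_add_mul_of_coprime {a b : ℕ} (hab : a.Coprime b) {F G m : ℕ}
    (hm : a * F + b * G + a * b < m) : ∃ x y : ℕ, F < x ∧ G < y ∧ m = a * x + b * y := by
  rcases Nat.eq_zero_or_pos b with rfl | hb
  · obtain rfl : a = 1 := (Nat.coprime_zero_right a).mp hab
    exact ⟨m, G + 1, by omega, by omega, by ring⟩
  have : NeZero b := ⟨hb.ne'⟩
  obtain ⟨x, hFx, hxF, hx⟩ := Nat.exists_mul_modEq_of_coprime hab (F + 1) m
  have hax : a * x ≤ a * F + a * b := by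
    calc a * x ≤ a * (F + b) := Nat.mul_le_mul_left a (by omega)
      _ = a * F + a * b := by ring
  obtain ⟨y, hy⟩ := (Nat.modEq_iff_dvd' (by omega)).mp hx
  have hGy : b * G < b * y := by omega
  exact ⟨x, y, by omega, Nat.lt_of_mul_lt_mul_left hGy, by omega⟩

theorem glue_gt_frobenius_mem_general (A B : Set ℕ) (FA FB k1 k2 : ℕ)
    (hFA : IsFrobenius (NS A) FA) (hFB : IsFrobenius (NS B) FB)
    (hcop : Nat.Coprime k1 k2) :
    ∀ m : ℕ, k1 * FA + k2 * FB + k1 * k2 < m → m ∈ NS (glueGens A B k1 k2) := by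
  intro m hm
  obtain ⟨x, y, hx, hy, rfl⟩ := Nat.exists_eq_mul_add_mul_of_coprime hcop hm
  exact mul_add_mul_mem_NS_glueGens k1 k2 (hFA.2 x hx) (hFB.2 y hy)

/-- Every integer strictly larger than `k₁F_A + k₂F_B + k₁k₂` is in the gluing semigroup. -/
theorem glue_gt_frobenius_mem (A B : Set ℕ) (FA FB k1 k2 : ℕ)
    (hFA : IsFrobenius (NS A) FA) (hFB : IsFrobenius (NS B) FB)
    (hk1B : k1 ∈ NS B) (hk2A : k2 ∈ NS A)
    (hcop : Nat.Coprime k1 k2) :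
    ∀ m : ℕ, k1 * FA + k2 * FB + k1 * k2 < m → m ∈ NS (glueGens A B k1 k2) :=
  glue_gt_frobenius_mem_general A B FA FB k1 k2 hFA hFB hcop
end

section
/- With notation as in the gluing construction, the elements k_1·x + k_2·(F_B + i), for x an element of ⟨A⟩ with x < F_A (or x = 0, i.e., x in the set of elements of ⟨A⟩ less than F_A) and 1 ≤ i ≤ k_1, are pairwise distinct elements of ⟨C⟩ that are strictly less than F_C = k_1F_A + k_2F_B + k_1k_2. Consequently n_C ≥ k_1·n_A, where n_S denotes the number of elements of a numerical semigroup S less than its Frobenius number. -/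
/-- `n_S` : the number of elements of `S` less than the Frobenius number `F`. -/
noncomputable def nElt (S : AddSubmonoid ℕ) (F : ℕ) : ℕ := {s : ℕ | s ∈ S ∧ s < F}.ncard

lemma mul_add_mul_add_lt {x FA FB k1 k2 i : ℕ} (hx : x < FA) (hi : 1 ≤ i) (hik : i ≤ k1) :
    k1 * x + k2 * (FB + i) < k1 * FA + k2 * FB + k1 * k2 := by
  have hxFA : k1 * (x + 1) ≤ k1 * FA := Nat.mul_le_mul_left k1 hx
  have hik' : k2 * i ≤ k2 * k1 := Nat.mul_le_mul_left k2 hik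
  nlinarith

/-- Reducing modulo `k₁` and cancelling the unit `k₂` forces `i ≡ i'`, and `1 ≤ i, i' ≤ k₁`
leaves no room for a nonzero difference. -/
lemma eq_and_eq_of_mul_add_mul_eq {k1 k2 x x' c i i' : ℕ} (hcop : Nat.Coprime k1 k2)
    (hi : 1 ≤ i) (hik : i ≤ k1) (hi' : 1 ≤ i') (hi'k : i' ≤ k1)
    (h : k1 * x + k2 * (c + i) = k1 * x' + k2 * (c + i')) : x = x' ∧ i = i' := by
  rw [mul_add, mul_add] at h
  have hz : ((k1 * x + (k2 * c + k2 * i) : ℕ) : ℤ) = ((k1 * x' + (k2 * c + k2 * i') : ℕ) : ℤ) :=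
    congrArg _ h
  push_cast at hz
  have hdvd : (k1 : ℤ) ∣ k2 * ((i' : ℤ) - i) := ⟨(x : ℤ) - x', by linear_combination -hz⟩
  have hdvd' : (k1 : ℤ) ∣ (i' : ℤ) - i :=
    Int.dvd_of_dvd_mul_right_of_gcd_one hdvd (by simpa [Int.gcd] using hcop)
  have hzero : (i' : ℤ) - i = 0 :=
    Int.eq_zero_of_abs_lt_dvd hdvd' (by rw [abs_sub_lt_iff]; omega)
  have hii' : i = i' := by omega
  subst hii'
  have hk1 : 0 < k1 := by omega
  exact ⟨Nat.eq_of_mul_eq_mul_left hk1 (by omega), rfl⟩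

lemma mul_ncard_le_ncard_of_injOn {α β : Type*} {s : Set α} {t : Set β} {k : ℕ}
    (f : α × ℕ → β) (hmaps : Set.MapsTo f (s ×ˢ Set.Icc 1 k) t)
    (hinj : Set.InjOn f (s ×ˢ Set.Icc 1 k)) (ht : t.Finite) : k * s.ncard ≤ t.ncard := by
  calc k * s.ncard = (f '' (s ×ˢ Set.Icc 1 k)).ncard := by
        rw [hinj.ncard_image, Set.ncard_prod, Set.ncard_Icc_nat, Nat.add_sub_cancel, mul_comm]
    _ ≤ t.ncard := Set.ncard_le_ncard hmaps.image_subset ht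

theorem glue_count_A_general (A B : Set ℕ) (FA FB k1 k2 : ℕ)
    (hFB : IsFrobenius (NS B) FB)
    (hcop : Nat.Coprime k1 k2) :
    (∀ x ∈ NS A, x < FA → ∀ i : ℕ, 1 ≤ i → i ≤ k1 →
        k1 * x + k2 * (FB + i) ∈ NS (glueGens A B k1 k2) ∧
        k1 * x + k2 * (FB + i) < k1 * FA + k2 * FB + k1 * k2) ∧
    (∀ x ∈ NS A, x < FA → ∀ x' ∈ NS A, x' < FA →
      ∀ i i' : ℕ, 1 ≤ i → i ≤ k1 → 1 ≤ i' → i' ≤ k1 →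
        k1 * x + k2 * (FB + i) = k1 * x' + k2 * (FB + i') → x = x' ∧ i = i') ∧
    nElt (NS (glueGens A B k1 k2)) (k1 * FA + k2 * FB + k1 * k2) ≥ k1 * nElt (NS A) FA := by
  have mem_lt x (hx : x ∈ NS A) (hxFA : x < FA) i (hi : 1 ≤ i) (hik : i ≤ k1) :=
    And.intro (mul_add_mul_mem_NS_glueGens k1 k2 hx (hFB.2 (FB + i) (by omega)))
      (mul_add_mul_add_lt (FB := FB) (k2 := k2) hxFA hi hik)
  have inj x (_ : x ∈ NS A) (_ : x < FA) x' (_ : x' ∈ NS A) (_ : x' < FA) i i' (hi : 1 ≤ i)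
      (hik : i ≤ k1) (hi' : 1 ≤ i') (hi'k : i' ≤ k1) :=
    eq_and_eq_of_mul_add_mul_eq (x := x) (x' := x') (c := FB) hcop hi hik hi' hi'k
  refine ⟨mem_lt, inj, ?_⟩
  refine mul_ncard_le_ncard_of_injOn (fun p => k1 * p.1 + k2 * (FB + p.2))
    (fun p ⟨⟨hx, hxFA⟩, hi, hik⟩ => mem_lt _ hx hxFA _ hi hik) ?_
    ((Set.finite_Iio _).subset fun _ hs => hs.2)
  rintro ⟨x, i⟩ ⟨⟨hx, hxFA⟩, hi, hik⟩ ⟨x', i'⟩ ⟨⟨hx', hx'FA⟩, hi', hi'k⟩ h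
  obtain ⟨rfl, rfl⟩ := inj x hx hxFA x' hx' hx'FA i i' hi hik hi' hi'k h
  rfl

/-- The elements `k₁x + k₂(F_B + i)`, for `x ∈ ⟨A⟩` with `x < F_A` and `1 ≤ i ≤ k₁`, are
pairwise distinct elements of `⟨C⟩` strictly less than `F_C`; hence `n_C ≥ k₁ n_A`. -/
theorem glue_count_A (A B : Set ℕ) (FA FB k1 k2 : ℕ)
    (hFA : IsFrobenius (NS A) FA) (hFB : IsFrobenius (NS B) FB)
    (hk1B : k1 ∈ NS B) (hk2A : k2 ∈ NS A)
    (hcop : Nat.Coprime k1 k2) :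
    (∀ x ∈ NS A, x < FA → ∀ i : ℕ, 1 ≤ i → i ≤ k1 →
        k1 * x + k2 * (FB + i) ∈ NS (glueGens A B k1 k2) ∧
        k1 * x + k2 * (FB + i) < k1 * FA + k2 * FB + k1 * k2) ∧
    (∀ x ∈ NS A, x < FA → ∀ x' ∈ NS A, x' < FA →
      ∀ i i' : ℕ, 1 ≤ i → i ≤ k1 → 1 ≤ i' → i' ≤ k1 →
        k1 * x + k2 * (FB + i) = k1 * x' + k2 * (FB + i') → x = x' ∧ i = i') ∧
    nElt (NS (glueGens A B k1 k2)) (k1 * FA + k2 * FB + k1 * k2) ≥ k1 * nElt (NS A) FA :=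
  glue_count_A_general A B FA FB k1 k2 hFB hcop
end

section
/- With notation as in the gluing construction, the elements k_1(F_A+i) + k_2(F_B+j) for 1 ≤ i ≤ ⌊k_2/2⌋ and 1 ≤ j ≤ ⌊k_1/2⌋ are pairwise distinct elements of ⟨C⟩ strictly less than F_C = k_1F_A + k_2F_B + k_1k_2, and they are distinct from all the elements k_1·x + k_2·(F_B+i') with x ∈ ⟨A⟩, x < F_A, 1 ≤ i' ≤ k_1. Hence n_C ≥ k_1·n_A + ⌊k_1/2⌋·⌊k_2/2⌋. -/
lemma mem_glue_left {A : Set ℕ} (B : Set ℕ) (k1 k2 : ℕ) {x : ℕ} (hx : x ∈ NS A) :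
    k1 * x ∈ NS (glueGens A B k1 k2) := by
  have h1 : k1 * x ∈ (NS A).map (AddMonoidHom.mulLeft k1) := ⟨x, hx, rfl⟩
  rw [NS, AddMonoidHom.map_mclosure] at h1
  refine AddSubmonoid.closure_mono ?_ h1
  intro y hy
  exact Set.mem_union_left _ hy

lemma mem_glue_right (A : Set ℕ) {B : Set ℕ} (k1 k2 : ℕ) {x : ℕ} (hx : x ∈ NS B) :
    k2 * x ∈ NS (glueGens A B k1 k2) := by
  have h1 : k2 * x ∈ (NS B).map (AddMonoidHom.mulLeft k2) := ⟨x, hx, rfl⟩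
  rw [NS, AddMonoidHom.map_mclosure] at h1
  refine AddSubmonoid.closure_mono ?_ h1
  intro y hy
  exact Set.mem_union_right _ hy

lemma glue_cancel {k1 k2 a b c d : ℕ} (hcop : Nat.Coprime k1 k2) (hk1 : 0 < k1)
    (h : k1 * a + k2 * b = k1 * c + k2 * d) (h1 : d < b + k1) (h2 : b < d + k1) :
    a = c ∧ b = d := by
  suffices H : ∀ a b c d : ℕ, k1*a + k2*b = k1*c + k2*d → b ≤ d → d < b + k1 →
      a = c ∧ b = d by
    rcases le_total b d with hle | hle
    · exact H a b c d h hle h1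
    · obtain ⟨e1, e2⟩ := H c d a b h.symm hle h2; exact ⟨e1.symm, e2.symm⟩
  intro a b c d h hle hlt
  obtain ⟨e, rfl⟩ : ∃ e, d = b + e := ⟨d - b, by omega⟩
  have hx : k2 * (b + e) = k2 * b + k2 * e := by ring
  have h' : k1 * a = k1 * c + k2 * e := by omega
  have hac : c ≤ a := Nat.le_of_mul_le_mul_left (by omega) hk1
  obtain ⟨f, rfl⟩ : ∃ f, a = c + f := ⟨a - c, by omega⟩
  have hy : k1 * (c + f) = k1 * c + k1 * f := by ring
  have hz : k2 * e = k1 * f := by omega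
  have hdvd : k1 ∣ e := hcop.dvd_of_dvd_mul_left ⟨f, hz⟩
  have he : e = 0 := Nat.eq_zero_of_dvd_of_lt hdvd (by omega)
  subst he
  simp only [Nat.mul_zero] at hz
  have hf : f = 0 := by
    rcases Nat.mul_eq_zero.mp hz.symm with h0 | h0
    · omega
    · exact h0
  constructor <;> omega

lemma ncard_prod' {α β : Type*} (s : Set α) (t : Set β) :
    (s ×ˢ t).ncard = s.ncard * t.ncard := by
  rw [← Nat.card_coe_set_eq, ← Nat.card_coe_set_eq, ← Nat.card_coe_set_eq,
    ← Nat.card_prod]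
  exact Nat.card_congr (Equiv.Set.prod s t)

lemma ncard_Icc' (a b : ℕ) : (Set.Icc a b).ncard = b + 1 - a := by
  rw [← Finset.coe_Icc, Set.ncard_coe_finset, Nat.card_Icc]

lemma half_bound {p q : ℕ} (hp : p % 2 = 1) (hp2 : 2 ≤ p) (hq : 2 ≤ q) :
    p * (2 * (q / 2)) + q * (2 * (p / 2)) < 2 * (p * q) := by
  have h1 : p * (2 * (q / 2)) ≤ p * q := Nat.mul_le_mul_left _ (by omega)
  have h2 : q * (2 * (p / 2)) < q * p :=
    mul_lt_mul_of_pos_left (show 2 * (p / 2) < p by omega) (by omega)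
  have h3 : p * q = q * p := mul_comm _ _
  omega

lemma glue_bound {k1 k2 i j : ℕ} (hcop : Nat.Coprime k1 k2)
    (hi1 : 1 ≤ i) (hi : i ≤ k2 / 2) (hj1 : 1 ≤ j) (hj : j ≤ k1 / 2) :
    k1 * i + k2 * j < k1 * k2 := by
  have hk1 : 2 ≤ k1 := by omega
  have hk2 : 2 ≤ k2 := by omega
  have hpar : k1 % 2 = 1 ∨ k2 % 2 = 1 := by
    by_contra hcon
    push_neg at hcon
    have hd := Nat.dvd_gcd (Nat.dvd_of_mod_eq_zero (by omega : k1 % 2 = 0))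
      (Nat.dvd_of_mod_eq_zero (by omega : k2 % 2 = 0))
    rw [hcop] at hd
    omega
  have e1 : 2 * (k1 * i) ≤ k1 * (2 * (k2 / 2)) := by
    have := Nat.mul_le_mul_left k1 (show 2 * i ≤ 2 * (k2 / 2) by omega)
    calc 2 * (k1 * i) = k1 * (2 * i) := by ring
    _ ≤ _ := this
  have e2 : 2 * (k2 * j) ≤ k2 * (2 * (k1 / 2)) := by
    have := Nat.mul_le_mul_left k2 (show 2 * j ≤ 2 * (k1 / 2) by omega)
    calc 2 * (k2 * j) = k2 * (2 * j) := by ring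
    _ ≤ _ := this
  have hkey : k1 * (2 * (k2 / 2)) + k2 * (2 * (k1 / 2)) < 2 * (k1 * k2) := by
    rcases hpar with hp | hp
    · have := half_bound hp hk1 hk2
      have hc : k2 * k1 = k1 * k2 := mul_comm _ _
      omega
    · have := half_bound hp hk2 hk1
      have hc : k2 * k1 = k1 * k2 := mul_comm _ _
      omega
  omega

/-- The elements `k₁(F_A+i) + k₂(F_B+j)` for `1 ≤ i ≤ ⌊k₂/2⌋`, `1 ≤ j ≤ ⌊k₁/2⌋` are pairwise
distinct elements of `⟨C⟩` strictly less than `F_C`, distinct from the elements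
`k₁x + k₂(F_B+i')` with `x ∈ ⟨A⟩`, `x < F_A`, `1 ≤ i' ≤ k₁`; hence
`n_C ≥ k₁ n_A + ⌊k₁/2⌋⌊k₂/2⌋`. -/
theorem glue_count_extra (A B : Set ℕ) (FA FB k1 k2 : ℕ)
    (hFA : IsFrobenius (NS A) FA) (hFB : IsFrobenius (NS B) FB)
    (hk1B : k1 ∈ NS B) (hk2A : k2 ∈ NS A)
    (hcop : Nat.Coprime k1 k2) :
    (∀ i j : ℕ, 1 ≤ i → i ≤ k2 / 2 → 1 ≤ j → j ≤ k1 / 2 →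
        k1 * (FA + i) + k2 * (FB + j) ∈ NS (glueGens A B k1 k2) ∧
        k1 * (FA + i) + k2 * (FB + j) < k1 * FA + k2 * FB + k1 * k2) ∧
    (∀ i j i' j' : ℕ, 1 ≤ i → i ≤ k2 / 2 → 1 ≤ j → j ≤ k1 / 2 →
        1 ≤ i' → i' ≤ k2 / 2 → 1 ≤ j' → j' ≤ k1 / 2 →
        k1 * (FA + i) + k2 * (FB + j) = k1 * (FA + i') + k2 * (FB + j') → i = i' ∧ j = j') ∧
    (∀ i j : ℕ, 1 ≤ i → i ≤ k2 / 2 → 1 ≤ j → j ≤ k1 / 2 →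
      ∀ x ∈ NS A, x < FA → ∀ i' : ℕ, 1 ≤ i' → i' ≤ k1 →
        k1 * (FA + i) + k2 * (FB + j) ≠ k1 * x + k2 * (FB + i')) ∧
    nElt (NS (glueGens A B k1 k2)) (k1 * FA + k2 * FB + k1 * k2) ≥
      k1 * nElt (NS A) FA + (k1 / 2) * (k2 / 2) := by
  have c1 : ∀ i j : ℕ, 1 ≤ i → i ≤ k2 / 2 → 1 ≤ j → j ≤ k1 / 2 →
      k1 * (FA + i) + k2 * (FB + j) ∈ NS (glueGens A B k1 k2) ∧
      k1 * (FA + i) + k2 * (FB + j) < k1 * FA + k2 * FB + k1 * k2 := by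
    intro i j hi1 hi hj1 hj
    constructor
    · exact AddSubmonoid.add_mem _ (mem_glue_left B k1 k2 (hFA.2 _ (by omega)))
        (mem_glue_right A k1 k2 (hFB.2 _ (by omega)))
    · have hb := glue_bound hcop hi1 hi hj1 hj
      have e1 : k1 * (FA + i) = k1 * FA + k1 * i := by ring
      have e2 : k2 * (FB + j) = k2 * FB + k2 * j := by ring
      omega
  have c2 : ∀ i j i' j' : ℕ, 1 ≤ i → i ≤ k2 / 2 → 1 ≤ j → j ≤ k1 / 2 →
      1 ≤ i' → i' ≤ k2 / 2 → 1 ≤ j' → j' ≤ k1 / 2 →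
      k1 * (FA + i) + k2 * (FB + j) = k1 * (FA + i') + k2 * (FB + j') → i = i' ∧ j = j' := by
    intro i j i' j' hi1 hi hj1 hj hi1' hi' hj1' hj' heq
    have hk1 : 0 < k1 := by omega
    obtain ⟨u, v⟩ := glue_cancel hcop hk1 heq (by omega) (by omega)
    exact ⟨by omega, by omega⟩
  have c3 : ∀ i j : ℕ, 1 ≤ i → i ≤ k2 / 2 → 1 ≤ j → j ≤ k1 / 2 →
      ∀ x ∈ NS A, x < FA → ∀ i' : ℕ, 1 ≤ i' → i' ≤ k1 →
      k1 * (FA + i) + k2 * (FB + j) ≠ k1 * x + k2 * (FB + i') := by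
    intro i j hi1 hi hj1 hj x hx hxFA i' hi1' hi' heq
    have hk1 : 0 < k1 := by omega
    obtain ⟨u, v⟩ := glue_cancel hcop hk1 heq (by omega) (by omega)
    omega
  refine ⟨c1, c2, c3, ?_⟩
  by_cases hk10 : k1 = 0
  · subst hk10
    have hz : 0 * nElt (NS A) FA + 0 / 2 * (k2 / 2) = 0 := by simp
    rw [hz]
    exact Nat.zero_le _
  have hk1 : 0 < k1 := Nat.pos_of_ne_zero hk10
  set C := NS (glueGens A B k1 k2) with hC
  set FC := k1 * FA + k2 * FB + k1 * k2 with hFC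
  have hTfin : {s : ℕ | s ∈ C ∧ s < FC}.Finite :=
    (Set.finite_Iio FC).subset (fun s hs => hs.2)
  set sA : Set ℕ := {x | x ∈ NS A ∧ x < FA} with hsA
  have hsAfin : sA.Finite := (Set.finite_Iio FA).subset (fun s hs => hs.2)
  set f1 : ℕ × ℕ → ℕ := fun p => k1 * p.1 + k2 * (FB + p.2) with hf1
  set f2 : ℕ × ℕ → ℕ := fun p => k1 * (FA + p.1) + k2 * (FB + p.2) with hf2
  set s1 : Set (ℕ × ℕ) := sA ×ˢ Set.Icc 1 k1 with hs1
  set s2 : Set (ℕ × ℕ) := Set.Icc 1 (k2 / 2) ×ˢ Set.Icc 1 (k1 / 2) with hs2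
  have hs1fin : s1.Finite := hsAfin.prod (Set.finite_Icc _ _)
  have hs2fin : s2.Finite := (Set.finite_Icc _ _).prod (Set.finite_Icc _ _)
  have hsub1 : f1 '' s1 ⊆ {s : ℕ | s ∈ C ∧ s < FC} := by
    rintro _ ⟨⟨x, i'⟩, hmem, rfl⟩
    obtain ⟨hma1, hmb1⟩ := hmem
    rw [Set.mem_Icc] at hmb1
    obtain ⟨hx, hxFA⟩ := hma1
    obtain ⟨hi'1, hi'2⟩ := hmb1
    constructor
    · exact AddSubmonoid.add_mem _ (mem_glue_left B k1 k2 hx)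
        (mem_glue_right A k1 k2 (hFB.2 _ (by omega)))
    · have e2 : k2 * (FB + i') = k2 * FB + k2 * i' := by ring
      have t1 : k1 * (x + 1) ≤ k1 * FA := Nat.mul_le_mul_left _ (by omega)
      have t2 : k2 * i' ≤ k2 * k1 := Nat.mul_le_mul_left _ hi'2
      have e3 : k1 * (x + 1) = k1 * x + k1 := by ring
      have e4 : k2 * k1 = k1 * k2 := mul_comm _ _
      show k1 * x + k2 * (FB + i') < FC
      omega
  have hsub2 : f2 '' s2 ⊆ {s : ℕ | s ∈ C ∧ s < FC} := by
    rintro _ ⟨⟨i, j⟩, hmem, rfl⟩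
    obtain ⟨hma, hmb⟩ := hmem
    rw [Set.mem_Icc] at hma hmb
    obtain ⟨hi1, hi2⟩ := hma
    obtain ⟨hj1, hj2⟩ := hmb
    exact c1 i j hi1 hi2 hj1 hj2
  have hinj1 : Set.InjOn f1 s1 := by
    rintro ⟨x, i'⟩ hm1 ⟨y, j'⟩ hm2 heq
    obtain ⟨hma1, hmb1⟩ := hm1
    rw [Set.mem_Icc] at hmb1
    obtain ⟨hx, hxFA⟩ := hma1
    obtain ⟨hi'1, hi'2⟩ := hmb1
    obtain ⟨hma2, hmb2⟩ := hm2
    rw [Set.mem_Icc] at hmb2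
    obtain ⟨hy, hyFA⟩ := hma2
    obtain ⟨hj'1, hj'2⟩ := hmb2
    obtain ⟨u, v⟩ := glue_cancel hcop hk1 heq (by omega) (by omega)
    simp only [Prod.mk.injEq]
    exact ⟨u, by omega⟩
  have hinj2 : Set.InjOn f2 s2 := by
    rintro ⟨i, j⟩ hm1 ⟨i', j'⟩ hm2 heq
    obtain ⟨hma, hmb⟩ := hm1
    rw [Set.mem_Icc] at hma hmb
    obtain ⟨hi1, hi2⟩ := hma
    obtain ⟨hj1, hj2⟩ := hmb
    obtain ⟨hma', hmb'⟩ := hm2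
    rw [Set.mem_Icc] at hma' hmb'
    obtain ⟨hi1', hi2'⟩ := hma'
    obtain ⟨hj1', hj2'⟩ := hmb'
    obtain ⟨u, v⟩ := c2 i j i' j' hi1 hi2 hj1 hj2 hi1' hi2' hj1' hj2' heq
    simp only [Prod.mk.injEq]
    exact ⟨u, v⟩
  have hdisj : Disjoint (f1 '' s1) (f2 '' s2) := by
    rw [Set.disjoint_right]
    rintro _ ⟨⟨i, j⟩, hmem2, rfl⟩ ⟨⟨x, i'⟩, hmem1, heq⟩
    obtain ⟨hma, hmb⟩ := hmem2
    rw [Set.mem_Icc] at hma hmb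
    obtain ⟨hi1, hi2⟩ := hma
    obtain ⟨hj1, hj2⟩ := hmb
    obtain ⟨hma1, hmb1⟩ := hmem1
    rw [Set.mem_Icc] at hmb1
    obtain ⟨hx, hxFA⟩ := hma1
    obtain ⟨hi'1, hi'2⟩ := hmb1
    exact c3 i j hi1 hi2 hj1 hj2 x hx hxFA i' hi'1 hi'2 heq.symm
  have hcard : (f1 '' s1 ∪ f2 '' s2).ncard ≤ {s : ℕ | s ∈ C ∧ s < FC}.ncard :=
    Set.ncard_le_ncard (Set.union_subset hsub1 hsub2) hTfin
  rw [Set.ncard_union_eq hdisj (hs1fin.image _) (hs2fin.image _),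
    Set.ncard_image_of_injOn hinj1, Set.ncard_image_of_injOn hinj2,
    hs1, hs2, ncard_prod', ncard_prod', ncard_Icc', ncard_Icc', ncard_Icc'] at hcard
  have hgoal : nElt C FC = {s : ℕ | s ∈ C ∧ s < FC}.ncard := rfl
  have hnA : nElt (NS A) FA = sA.ncard := rfl
  show nElt C FC ≥ k1 * nElt (NS A) FA + (k1 / 2) * (k2 / 2)
  rw [hgoal, hnA]
  have e1 : sA.ncard * (k1 + 1 - 1) = k1 * sA.ncard := by
    rw [Nat.add_sub_cancel, mul_comm]
  have e2 : (k2 / 2 + 1 - 1) * (k1 / 2 + 1 - 1) = (k1 / 2) * (k2 / 2) := by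
    rw [Nat.add_sub_cancel, Nat.add_sub_cancel, mul_comm]
  omega
end

section
/- With notation as in the gluing construction, n_C ≥ k_2·n_B + ⌊k_1/2⌋·⌊k_2/2⌋ ≥ k_2·n_B + (k_1−1)(k_2−1)/4. -/
lemma glue_mem_left (A B : Set ℕ) (k1 k2 a : ℕ) (ha : a ∈ NS A) :
    k1 * a ∈ NS (glueGens A B k1 k2) := by
  have h1 : k1 * a ∈ AddSubmonoid.map (AddMonoidHom.mulLeft k1) (NS A) :=
    ⟨a, ha, rfl⟩
  rw [NS, AddMonoidHom.map_mclosure] at h1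
  have h2 : AddSubmonoid.closure ((⇑(AddMonoidHom.mulLeft k1)) '' A) ≤
      NS (glueGens A B k1 k2) := by
    apply AddSubmonoid.closure_mono
    intro x hx
    exact Set.subset_union_left hx
  exact h2 h1

lemma glue_mem_right (A B : Set ℕ) (k1 k2 b : ℕ) (hb : b ∈ NS B) :
    k2 * b ∈ NS (glueGens A B k1 k2) := by
  have h1 : k2 * b ∈ AddSubmonoid.map (AddMonoidHom.mulLeft k2) (NS B) :=
    ⟨b, hb, rfl⟩
  rw [NS, AddMonoidHom.map_mclosure] at h1
  have h2 : AddSubmonoid.closure ((⇑(AddMonoidHom.mulLeft k2)) '' B) ≤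
      NS (glueGens A B k1 k2) := by
    apply AddSubmonoid.closure_mono
    intro x hx
    exact Set.subset_union_right hx
  exact h2 h1

/-- Cancellation: if `k1*x1 + k2*y1 = k1*x2 + k2*y2` with `|x1 - x2| < k2`, then equal. -/
lemma glue_cancel_s6 {k1 k2 x1 y1 x2 y2 : ℕ} (hcop : Nat.Coprime k1 k2) (hk2 : 0 < k2)
    (e : k1 * x1 + k2 * y1 = k1 * x2 + k2 * y2)
    (h1 : x1 < x2 + k2) (h2 : x2 < x1 + k2) : x1 = x2 ∧ y1 = y2 := by
  have hic : IsCoprime (k1 : ℤ) (k2 : ℤ) := Int.isCoprime_iff_gcd_eq_one.mpr hcop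
  have he : (k1 : ℤ) * ((x1 : ℤ) - x2) = (k2 : ℤ) * ((y2 : ℤ) - y1) := by
    have := congrArg (fun n : ℕ => (n : ℤ)) e
    push_cast at this
    linarith
  have hdvd : (k2 : ℤ) ∣ ((x1 : ℤ) - x2) := by
    refine hic.symm.dvd_of_dvd_mul_left ?_
    exact ⟨(y2 : ℤ) - y1, by linarith⟩
  have hx : (x1 : ℤ) - x2 = 0 := by
    refine Int.eq_zero_of_abs_lt_dvd hdvd ?_
    rw [abs_lt]
    constructor <;> [push_cast; push_cast] <;> omega
  have hx' : x1 = x2 := by omega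
  subst hx'
  refine ⟨rfl, ?_⟩
  have : k2 * y1 = k2 * y2 := by omega
  exact Nat.eq_of_mul_eq_mul_left hk2 this

lemma floor_half_lt {k1 k2 i j : ℕ} (hi1 : 1 ≤ i) (hi2 : i ≤ k2 / 2)
    (hj1 : 1 ≤ j) (hj2 : j ≤ k1 / 2) (hodd : k1 % 2 = 1 ∨ k2 % 2 = 1) :
    k1 * i + k2 * j < k1 * k2 := by
  have hk1 : 2 ≤ k1 := by omega
  have hk2 : 2 ≤ k2 := by omega
  have h1 : k1 * i ≤ k1 * (k2 / 2) := Nat.mul_le_mul_left _ hi2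
  have h2 : k2 * j ≤ k2 * (k1 / 2) := Nat.mul_le_mul_left _ hj2
  have e1 : k1 = 2 * (k1 / 2) + k1 % 2 := by omega
  have e2 : k2 = 2 * (k2 / 2) + k2 % 2 := by omega
  have ha : 1 ≤ k1 / 2 := by omega
  have hb : 1 ≤ k2 / 2 := by omega
  have hb2 : k1 * (2 * (k2 / 2)) ≤ k1 * k2 := Nat.mul_le_mul_left _ (by omega)
  have ha2 : k2 * (2 * (k1 / 2)) ≤ k2 * k1 := Nat.mul_le_mul_left _ (by omega)
  rcases hodd with h | h <;> nlinarith [h1, h2, hb2, ha2]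

/-- `n_C ≥ k₂·n_B + ⌊k₁/2⌋⌊k₂/2⌋ ≥ k₂·n_B + (k₁−1)(k₂−1)/4`. -/
theorem glue_count_B (A B : Set ℕ) (FA FB k1 k2 : ℕ)
    (hFA : IsFrobenius (NS A) FA) (hFB : IsFrobenius (NS B) FB)
    (hk1B : k1 ∈ NS B) (hk2A : k2 ∈ NS A)
    (hcop : Nat.Coprime k1 k2) :
    nElt (NS (glueGens A B k1 k2)) (k1 * FA + k2 * FB + k1 * k2) ≥
      k2 * nElt (NS B) FB + (k1 / 2) * (k2 / 2) ∧
    (nElt (NS (glueGens A B k1 k2)) (k1 * FA + k2 * FB + k1 * k2) : ℚ) ≥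
      (k2 : ℚ) * (nElt (NS B) FB : ℚ) + ((k1 : ℚ) - 1) * ((k2 : ℚ) - 1) / 4 := by
  classical
  set F : ℕ := k1 * FA + k2 * FB + k1 * k2 with hF
  set C : AddSubmonoid ℕ := NS (glueGens A B k1 k2) with hC
  -- main ℕ inequality
  have hmain : nElt C F ≥ k2 * nElt (NS B) FB + (k1 / 2) * (k2 / 2) := by
    rcases Nat.eq_zero_or_pos k2 with hk20 | hk2pos
    · subst hk20; simp
    -- the finite set of B-elements below FB
    · have hBFfin : {b : ℕ | b ∈ NS B ∧ b < FB}.Finite :=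
        Set.Finite.subset (Set.finite_Iio FB) (fun x hx => hx.2)
      set BF : Finset ℕ := hBFfin.toFinset with hBFdef
      have hBFcard : nElt (NS B) FB = BF.card := by
        rw [nElt, Set.ncard_eq_toFinset_card _ hBFfin]
      have hBFmem : ∀ b, b ∈ BF ↔ b ∈ NS B ∧ b < FB := by
        intro b; rw [hBFdef, Set.Finite.mem_toFinset]; rfl
      set T1 : Finset ℕ :=
        ((Finset.Ioc FA (FA + k2)) ×ˢ BF).image (fun p => k1 * p.1 + k2 * p.2) with hT1
      set T2 : Finset ℕ :=
        ((Finset.Icc 1 (k2 / 2)) ×ˢ (Finset.Icc 1 (k1 / 2))).image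
          (fun p => k1 * (FA + p.1) + k2 * (FB + p.2)) with hT2
      have hodd : k1 % 2 = 1 ∨ k2 % 2 = 1 := by
        by_contra h
        push_neg at h
        have d1 : 2 ∣ k1 := by omega
        have d2 : 2 ∣ k2 := by omega
        have := Nat.dvd_gcd d1 d2
        rw [hcop.gcd_eq_one] at this
        omega
      -- cards
      have hcard1 : T1.card = k2 * nElt (NS B) FB := by
        rw [hT1, Finset.card_image_of_injOn, Finset.card_product, Nat.card_Ioc, hBFcard]
        · congr 1; omega
        · rintro ⟨m, b⟩ hmb ⟨m', b'⟩ hmb' he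
          simp only [Finset.coe_product, Set.mem_prod, Finset.mem_coe, Finset.mem_Ioc] at hmb hmb'
          dsimp only at he
          obtain ⟨hx, hx'⟩ := glue_cancel_s6 hcop hk2pos he (by omega) (by omega)
          simp [hx, hx']
      have hcard2 : T2.card = (k1 / 2) * (k2 / 2) := by
        rw [hT2, Finset.card_image_of_injOn, Finset.card_product, Nat.card_Icc, Nat.card_Icc]
        · simp only [Nat.add_sub_cancel]
          ring
        · rintro ⟨i, j⟩ hij ⟨i', j'⟩ hij' he
          simp only [Finset.coe_product, Set.mem_prod, Finset.mem_coe, Finset.mem_Icc] at hij hij'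
          dsimp only at he
          have he' : k1 * (FA + i) + k2 * (FB + j) = k1 * (FA + i') + k2 * (FB + j') := he
          obtain ⟨hx, hx'⟩ := glue_cancel_s6 hcop hk2pos he' (by omega) (by omega)
          have : i = i' := by omega
          subst this
          have : j = j' := by omega
          simp [this]
      -- all elements of T1 ∪ T2 are in the target set
      have hsub : (↑(T1 ∪ T2) : Set ℕ) ⊆ {s : ℕ | s ∈ C ∧ s < F} := by
        intro s hs
        simp only [Finset.coe_union, Set.mem_union, Finset.mem_coe] at hs
        rcases hs with hs | hs
        · rw [hT1, Finset.mem_image] at hs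
          obtain ⟨⟨m, b⟩, hmb, rfl⟩ := hs
          rw [Finset.mem_product, Finset.mem_Ioc] at hmb
          obtain ⟨⟨hm1, hm2⟩, hb⟩ := hmb
          rw [hBFmem] at hb
          refine ⟨?_, ?_⟩
          · exact C.add_mem (glue_mem_left A B k1 k2 m (hFA.2 m hm1))
              (glue_mem_right A B k1 k2 b hb.1)
          · have h1 : k1 * m ≤ k1 * (FA + k2) := Nat.mul_le_mul_left _ hm2
            have h2 : k2 * b < k2 * FB := mul_lt_mul_of_pos_left hb.2 hk2pos
            simp only [Set.mem_setOf_eq, hF]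
            nlinarith
        · rw [hT2, Finset.mem_image] at hs
          obtain ⟨⟨i, j⟩, hij, rfl⟩ := hs
          rw [Finset.mem_product, Finset.mem_Icc, Finset.mem_Icc] at hij
          obtain ⟨⟨hi1, hi2⟩, hj1, hj2⟩ := hij
          refine ⟨?_, ?_⟩
          · exact C.add_mem (glue_mem_left A B k1 k2 _ (hFA.2 _ (by omega)))
              (glue_mem_right A B k1 k2 _ (hFB.2 _ (by omega)))
          · have := floor_half_lt hi1 hi2 hj1 hj2 hodd
            simp only [Set.mem_setOf_eq, hF]
            nlinarith
      -- T1 and T2 are disjoint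
      have hdisj : Disjoint T1 T2 := by
        rw [Finset.disjoint_left]
        intro s hs1 hs2
        rw [hT1, Finset.mem_image] at hs1
        rw [hT2, Finset.mem_image] at hs2
        obtain ⟨⟨m, b⟩, hmb, he1⟩ := hs1
        obtain ⟨⟨i, j⟩, hij, he2⟩ := hs2
        rw [Finset.mem_product, Finset.mem_Ioc] at hmb
        rw [Finset.mem_product, Finset.mem_Icc, Finset.mem_Icc] at hij
        obtain ⟨⟨hm1, hm2⟩, hb⟩ := hmb
        rw [hBFmem] at hb
        obtain ⟨⟨hi1, hi2⟩, hj1, hj2⟩ := hij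
        have hk1pos : 0 < k1 := by omega
        have he : k1 * m + k2 * b = k1 * (FA + i) + k2 * (FB + j) := by
          rw [he1, ← he2]
        -- pass to ℤ
        have heZ : (k1 : ℤ) * ((m : ℤ) - FA - i) = (k2 : ℤ) * ((FB : ℤ) + j - b) := by
          have := congrArg (fun n : ℕ => (n : ℤ)) he
          push_cast at this
          linarith
        have hrpos : (0 : ℤ) < (FB : ℤ) + j - b := by
          have : b < FB := hb.2
          push_cast
          omega
        have hdpos : (0 : ℤ) < (m : ℤ) - FA - i := by
          by_contra hneg
          push_neg at hneg
          have h1 : (k1 : ℤ) * ((m : ℤ) - FA - i) ≤ 0 :=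
            mul_nonpos_of_nonneg_of_nonpos (by positivity) hneg
          have h2 : (0 : ℤ) < (k2 : ℤ) * ((FB : ℤ) + j - b) := by
            apply mul_pos (by exact_mod_cast hk2pos) hrpos
          omega
        have hic : IsCoprime (k1 : ℤ) (k2 : ℤ) := Int.isCoprime_iff_gcd_eq_one.mpr hcop
        have hdvd : (k2 : ℤ) ∣ ((m : ℤ) - FA - i) := by
          refine hic.symm.dvd_of_dvd_mul_left ?_
          exact ⟨(FB : ℤ) + j - b, by linarith⟩
        have hge : (k2 : ℤ) ≤ (m : ℤ) - FA - i := Int.le_of_dvd hdpos hdvd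
        have : (m : ℤ) ≤ (FA : ℤ) + k2 := by exact_mod_cast hm2
        have : (1 : ℤ) ≤ (i : ℤ) := by exact_mod_cast hi1
        omega
      -- finite target set
      have hSfin : {s : ℕ | s ∈ C ∧ s < F}.Finite :=
        Set.Finite.subset (Set.finite_Iio F) (fun x hx => hx.2)
      have hle : (T1 ∪ T2).card ≤ nElt C F := by
        rw [nElt]
        have := Set.ncard_le_ncard hsub hSfin
        rwa [Set.ncard_coe_finset] at this
      rw [Finset.card_union_of_disjoint hdisj, hcard1, hcard2] at hle
      exact hle
  refine ⟨hmain, ?_⟩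
  -- rational inequality follows from the ℕ one
  have hfl : ((k1 / 2 : ℕ) : ℚ) * ((k2 / 2 : ℕ) : ℚ) ≥
      ((k1 : ℚ) - 1) * ((k2 : ℚ) - 1) / 4 := by
    rcases Nat.eq_zero_or_pos k1 with h0 | h1pos
    · have hk2 : k2 = 1 := by
        have := hcop.gcd_eq_one
        simp [h0] at this
        omega
      subst h0; subst hk2; norm_num
    · rcases Nat.eq_zero_or_pos k2 with h0 | h2pos
      · have hk1 : k1 = 1 := by
          have := hcop.gcd_eq_one
          simp [h0] at this
          omega
        subst h0; subst hk1; norm_num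
      · have e1 : (2 : ℚ) * ((k1 / 2 : ℕ) : ℚ) ≥ (k1 : ℚ) - 1 := by
          have h : ((2 * (k1 / 2) + 1 : ℕ) : ℚ) ≥ ((k1 : ℕ) : ℚ) := by
            exact_mod_cast (by omega : 2 * (k1 / 2) + 1 ≥ k1)
          push_cast at h
          linarith
        have e2 : (2 : ℚ) * ((k2 / 2 : ℕ) : ℚ) ≥ (k2 : ℚ) - 1 := by
          have h : ((2 * (k2 / 2) + 1 : ℕ) : ℚ) ≥ ((k2 : ℕ) : ℚ) := by
            exact_mod_cast (by omega : 2 * (k2 / 2) + 1 ≥ k2)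
          push_cast at h
          linarith
        have p1 : (0 : ℚ) ≤ (k1 : ℚ) - 1 := by
          have : (1 : ℚ) ≤ (k1 : ℚ) := by exact_mod_cast h1pos
          linarith
        have p2 : (0 : ℚ) ≤ (k2 : ℚ) - 1 := by
          have : (1 : ℚ) ≤ (k2 : ℚ) := by exact_mod_cast h2pos
          linarith
        nlinarith
  have hcast : (nElt C F : ℚ) ≥
      (k2 : ℚ) * (nElt (NS B) FB : ℚ) + ((k1 / 2 : ℕ) : ℚ) * ((k2 / 2 : ℕ) : ℚ) := by
    have h := hmain
    have : ((k2 * nElt (NS B) FB + (k1 / 2) * (k2 / 2) : ℕ) : ℚ) ≤ (nElt C F : ℚ) := by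
      exact_mod_cast h
    push_cast at this
    push_cast
    linarith
  linarith
end

section
/- If numerical semigroups ⟨A⟩ (minimally generated by p elements) and ⟨B⟩ (minimally generated by q elements) both satisfy the Wilf inequality (p·n_A ≥ F_A + 1 and q·n_B ≥ F_B + 1), then their gluing ⟨C⟩, generated by C = k_1A ∪ k_2B (with k_1 ∈ ⟨B⟩\B, k_2 ∈ ⟨A⟩\A, gcd(k_1,k_2)=1), satisfies the Wilf inequality (p+q)·n_C ≥ F_C + 1. -/
open scoped Classical in
noncomputable def cnt (S : AddSubmonoid ℕ) (M : ℕ) : Finset ℕ :=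
  (Finset.range M).filter (· ∈ S)

lemma mem_cnt {S : AddSubmonoid ℕ} {M x : ℕ} : x ∈ cnt S M ↔ x < M ∧ x ∈ S := by
  classical
  simp [cnt]

lemma nElt_eq_card_cnt (S : AddSubmonoid ℕ) (F : ℕ) : nElt S F = (cnt S F).card := by
  rw [nElt, ← Set.ncard_coe_finset]
  congr 1
  ext x
  simp [mem_cnt, and_comm]

lemma cnt_card_of_frobenius {S : AddSubmonoid ℕ} {F : ℕ} (hF : IsFrobenius S F) (d : ℕ) :
    (cnt S (F + d + 1)).card = nElt S F + d := by
  induction d with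
  | zero =>
      have he : cnt S (F + 0 + 1) = cnt S F := by
        ext x
        simp only [mem_cnt]
        constructor
        · rintro ⟨hx, hxS⟩
          exact ⟨lt_of_le_of_ne (by omega) (fun h => hF.1 (h ▸ hxS)), hxS⟩
        · rintro ⟨hx, hxS⟩
          exact ⟨by omega, hxS⟩
      rw [he, nElt_eq_card_cnt, Nat.add_zero]
  | succ d ih =>
      have hins : cnt S (F + (d + 1) + 1) = insert (F + d + 1) (cnt S (F + d + 1)) := by
        ext x
        simp only [mem_cnt, Finset.mem_insert]
        constructor
        · rintro ⟨hx, hxS⟩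
          rcases eq_or_lt_of_le (show x ≤ F + d + 1 by omega) with h | h
          · exact Or.inl h
          · exact Or.inr ⟨h, hxS⟩
        · rintro (rfl | ⟨hx, hxS⟩)
          · exact ⟨by omega, hF.2 _ (by omega)⟩
          · exact ⟨by omega, hxS⟩
      rw [hins, Finset.card_insert_of_notMem (by simp [mem_cnt]), ih]
      omega

lemma mul_mem_glue_left {A B : Set ℕ} {k1 k2 a : ℕ} (ha : a ∈ NS A) :
    k1 * a ∈ NS (glueGens A B k1 k2) := by
  have h1 : k1 * a ∈ AddSubmonoid.map (AddMonoidHom.mulLeft k1) (NS A) :=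
    ⟨a, ha, rfl⟩
  rw [NS, AddMonoidHom.map_mclosure] at h1
  exact AddSubmonoid.closure_mono (Set.subset_union_left) h1

lemma mul_mem_glue_right {A B : Set ℕ} {k1 k2 b : ℕ} (hb : b ∈ NS B) :
    k2 * b ∈ NS (glueGens A B k1 k2) := by
  have h1 : k2 * b ∈ AddSubmonoid.map (AddMonoidHom.mulLeft k2) (NS B) :=
    ⟨b, hb, rfl⟩
  rw [NS, AddMonoidHom.map_mclosure] at h1
  exact AddSubmonoid.closure_mono (Set.subset_union_right) h1

lemma key_lt {A : Set ℕ} {FA k1 k2 s a : ℕ} (hFA : IsFrobenius (NS A) FA)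
    (hcop : Nat.Coprime k1 k2) (hk1 : 0 < k1) (hs : s < k1)
    (ha : a < FA + k2 * s / k1 + 1) (haS : a ∈ NS A) :
    k1 * a < k1 * FA + k2 * s := by
  rcases Nat.eq_zero_or_pos s with rfl | hs0
  · have ha' : a < FA + 1 := by simpa using ha
    have haF : a < FA := by
      rcases lt_or_eq_of_le (show a ≤ FA by omega) with h | h
      · exact h
      · exact absurd (h ▸ haS) hFA.1
    have := (Nat.mul_lt_mul_left hk1).mpr haF
    omega
  · have h1 : a ≤ FA + k2 * s / k1 := by omega
    have h2 : k1 * a ≤ k1 * FA + k1 * (k2 * s / k1) := by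
      calc k1 * a ≤ k1 * (FA + k2 * s / k1) := Nat.mul_le_mul_left _ h1
        _ = k1 * FA + k1 * (k2 * s / k1) := by ring
    have h3 : k1 * (k2 * s / k1) ≤ k2 * s := Nat.mul_div_le _ _
    have h4 : k1 * (k2 * s / k1) ≠ k2 * s := by
      intro h
      have hdvd : k1 ∣ k2 * s := ⟨_, h.symm⟩
      have : k1 ∣ s := (Nat.Coprime.dvd_of_dvd_mul_left (hcop) hdvd)
      have := Nat.le_of_dvd hs0 this
      omega
    omega

lemma side (A B : Set ℕ) (FA FB k1 k2 : ℕ)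
    (hFA : IsFrobenius (NS A) FA) (hFB : IsFrobenius (NS B) FB)
    (hcop : Nat.Coprime k1 k2) (hk1 : 0 < k1) :
    k1 * nElt (NS A) FA + ∑ s ∈ Finset.range k1, k2 * s / k1
      ≤ nElt (NS (glueGens A B k1 k2)) (k1 * FA + k2 * FB + k1 * k2) := by
  classical
  set S := NS (glueGens A B k1 k2) with hS
  set F := k1 * FA + k2 * FB + k1 * k2 with hF
  set φ : ℕ → ℕ → ℕ := fun s a => k1 * a + k2 * (FB + (k1 - s)) with hφ
  set Dfin : Finset ℕ :=
    (Finset.range k1).biUnion (fun s => (cnt (NS A) (FA + k2 * s / k1 + 1)).image (φ s))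
    with hD
  -- disjointness
  have hdisj : ∀ s ∈ Finset.range k1, ∀ t ∈ Finset.range k1, s ≠ t →
      Disjoint ((cnt (NS A) (FA + k2 * s / k1 + 1)).image (φ s))
               ((cnt (NS A) (FA + k2 * t / k1 + 1)).image (φ t)) := by
    intro s hs t ht hst
    simp only [Finset.mem_range] at hs ht
    rw [Finset.disjoint_left]
    rintro x hxs hxt
    obtain ⟨a, ha, rfl⟩ := Finset.mem_image.mp hxs
    obtain ⟨a', ha', heq⟩ := Finset.mem_image.mp hxt
    have hmod : (k2 * (FB + (k1 - t))) % k1 = (k2 * (FB + (k1 - s))) % k1 := by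
      have h1 := Nat.mul_add_mod k1 a' (k2 * (FB + (k1 - t)))
      have h2 := Nat.mul_add_mod k1 a (k2 * (FB + (k1 - s)))
      simp only [hφ] at heq
      rw [← h1, ← h2, heq]
    have hmod2 : (FB + (k1 - t)) ≡ (FB + (k1 - s)) [MOD k1] :=
      Nat.ModEq.cancel_left_of_coprime (by simpa [Nat.coprime_comm] using hcop) hmod
    have hmod3 : (k1 - t) ≡ (k1 - s) [MOD k1] := Nat.ModEq.add_left_cancel' FB hmod2
    have hmod4 := hmod3.add_right (s + t)
    have e1 : k1 - t + (s + t) = k1 + s := by omega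
    have e2 : k1 - s + (s + t) = k1 + t := by omega
    rw [e1, e2] at hmod4
    have : s % k1 = t % k1 := by
      have h5 : (k1 + s) % k1 = s % k1 := Nat.add_mod_left _ _
      have h6 : (k1 + t) % k1 = t % k1 := Nat.add_mod_left _ _
      unfold Nat.ModEq at hmod4
      omega
    rw [Nat.mod_eq_of_lt hs, Nat.mod_eq_of_lt ht] at this
    exact hst this
  have hinj : ∀ s, Function.Injective (φ s) := by
    intro s a a' h
    simp only [hφ] at h
    exact Nat.eq_of_mul_eq_mul_left hk1 (by omega)
  have hcard : Dfin.card = k1 * nElt (NS A) FA + ∑ s ∈ Finset.range k1, k2 * s / k1 := by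
    rw [hD, Finset.card_biUnion hdisj]
    have : ∀ s ∈ Finset.range k1,
        ((cnt (NS A) (FA + k2 * s / k1 + 1)).image (φ s)).card
          = nElt (NS A) FA + k2 * s / k1 := by
      intro s _
      rw [Finset.card_image_of_injective _ (hinj s), cnt_card_of_frobenius hFA]
    rw [Finset.sum_congr rfl this, Finset.sum_add_distrib, Finset.sum_const,
      Finset.card_range, smul_eq_mul]
  -- subset
  have hsub : (↑Dfin : Set ℕ) ⊆ {x | x ∈ S ∧ x < F} := by
    intro x hx
    simp only [hD, Finset.coe_biUnion, Set.mem_iUnion, Finset.mem_coe, Finset.mem_image,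
      Finset.mem_range] at hx
    obtain ⟨s, hs, a, ha, rfl⟩ := hx
    obtain ⟨halt, haS⟩ := mem_cnt.mp ha
    constructor
    · refine AddSubmonoid.add_mem _ (mul_mem_glue_left haS) (mul_mem_glue_right ?_)
      exact hFB.2 _ (by omega)
    · show φ s a < F
      have hkey := key_lt hFA hcop hk1 hs halt haS
      have hsplit : k2 * s + k2 * (k1 - s) = k2 * k1 := by
        rw [← Nat.mul_add]
        congr 1
        omega
      simp only [hφ, hF]
      have : k2 * (FB + (k1 - s)) = k2 * FB + k2 * (k1 - s) := by ring
      rw [this]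
      have hk21 : k2 * k1 = k1 * k2 := Nat.mul_comm _ _
      omega
  have hfin : {x | x ∈ S ∧ x < F}.Finite :=
    Set.Finite.subset (Set.finite_Iio F) (fun x hx => hx.2)
  calc k1 * nElt (NS A) FA + ∑ s ∈ Finset.range k1, k2 * s / k1
      = Dfin.card := hcard.symm
    _ = (↑Dfin : Set ℕ).ncard := (Set.ncard_coe_finset _).symm
    _ ≤ {x | x ∈ S ∧ x < F}.ncard := Set.ncard_le_ncard hsub hfin
    _ = nElt S F := rfl

lemma sum_div_reflect (k1 k2 : ℕ) (hk1 : 0 < k1) :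
    (k1 - 1) * (k2 - 1) ≤ 2 * ∑ s ∈ Finset.range k1, k2 * s / k1 := by
  have h0 : ∑ s ∈ Finset.range k1, k2 * s / k1 = ∑ s ∈ Finset.Ico 1 k1, k2 * s / k1 := by
    rw [Finset.range_eq_Ico, Finset.sum_eq_sum_Ico_succ_bot hk1]
    simp
  have hrefl : ∑ s ∈ Finset.Ico 1 k1, k2 * s / k1
      = ∑ s ∈ Finset.Ico 1 k1, k2 * (k1 - s) / k1 := by
    refine Finset.sum_nbij' (fun s => k1 - s) (fun s => k1 - s) ?_ ?_ ?_ ?_ ?_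
    · intro a ha; simp only [Finset.mem_Ico] at *; omega
    · intro a ha; simp only [Finset.mem_Ico] at *; omega
    · intro a ha; simp only [Finset.mem_Ico] at *; omega
    · intro a ha; simp only [Finset.mem_Ico] at *; omega
    · intro a ha
      simp only [Finset.mem_Ico] at ha
      show k2 * a / k1 = k2 * (k1 - (k1 - a)) / k1
      have h : k1 - (k1 - a) = a := by omega
      rw [h]
  have hterm : ∀ s ∈ Finset.Ico 1 k1,
      k2 - 1 ≤ k2 * s / k1 + k2 * (k1 - s) / k1 := by
    intro s hs
    simp only [Finset.mem_Ico] at hs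
    obtain ⟨q1, hq1⟩ : ∃ q, k2 * s / k1 = q := ⟨_, rfl⟩
    obtain ⟨q2, hq2⟩ : ∃ q, k2 * (k1 - s) / k1 = q := ⟨_, rfl⟩
    rw [hq1, hq2]
    have e1 := Nat.div_add_mod (k2 * s) k1
    have e2 := Nat.div_add_mod (k2 * (k1 - s)) k1
    have r1 := Nat.mod_lt (k2 * s) hk1
    have r2 := Nat.mod_lt (k2 * (k1 - s)) hk1
    rw [hq1] at e1
    rw [hq2] at e2
    have hsum : k2 * s + k2 * (k1 - s) = k2 * k1 := by
      rw [← Nat.mul_add]; congr 1; omega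
    have hlt : k1 * k2 < k1 * (q1 + q2 + 2) := by nlinarith
    have := Nat.lt_of_mul_lt_mul_left hlt
    omega
  have hsum2 : (Finset.Ico 1 k1).card • (k2 - 1)
      ≤ ∑ s ∈ Finset.Ico 1 k1, (k2 * s / k1 + k2 * (k1 - s) / k1) :=
    Finset.card_nsmul_le_sum _ _ _ hterm
  rw [Finset.sum_add_distrib, ← hrefl, Nat.card_Ico, smul_eq_mul] at hsum2
  omega

lemma NS_glue_zero_left (A X : Set ℕ) :
    AddSubmonoid.closure ((fun a => 0 * a) '' A ∪ X) = AddSubmonoid.closure X := by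
  apply le_antisymm
  · rw [AddSubmonoid.closure_le]
    rintro x (⟨a, _, rfl⟩ | hx)
    · simpa using (AddSubmonoid.closure X).zero_mem
    · exact AddSubmonoid.subset_closure hx
  · exact AddSubmonoid.closure_mono Set.subset_union_right

lemma NS_nonempty {A : Finset ℕ} {FA : ℕ} (hFA : IsFrobenius (NS (A : Set ℕ)) FA) :
    0 < A.card := by
  rw [Finset.card_pos]
  by_contra h
  rw [Finset.not_nonempty_iff_eq_empty] at h
  subst h
  have := hFA.2 (FA + 1) (by omega)
  rw [NS] at this
  simp only [Finset.coe_empty, AddSubmonoid.closure_empty, AddSubmonoid.mem_bot] at this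
  omega

/-- Gluing preserves the Wilf inequality. -/
theorem gluing_is_wilf (A B : Finset ℕ) (FA FB k1 k2 : ℕ)
    (hAmin : MinimallyGenerates (A : Set ℕ)) (hBmin : MinimallyGenerates (B : Set ℕ))
    (hFA : IsFrobenius (NS (A : Set ℕ)) FA) (hFB : IsFrobenius (NS (B : Set ℕ)) FB)
    (hk1B : k1 ∈ NS (B : Set ℕ)) (hk1nB : k1 ∉ B)
    (hk2A : k2 ∈ NS (A : Set ℕ)) (hk2nA : k2 ∉ A)
    (hcop : Nat.Coprime k1 k2)
    (hWA : A.card * nElt (NS (A : Set ℕ)) FA ≥ FA + 1)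
    (hWB : B.card * nElt (NS (B : Set ℕ)) FB ≥ FB + 1) :
    (A.card + B.card) * nElt (NS (glueGens (A : Set ℕ) (B : Set ℕ) k1 k2))
        (k1 * FA + k2 * FB + k1 * k2) ≥ k1 * FA + k2 * FB + k1 * k2 + 1 := by
  have hp : 0 < A.card := NS_nonempty hFA
  have hq : 0 < B.card := NS_nonempty hFB
  rcases Nat.eq_zero_or_pos k1 with rfl | hk1
  · -- k1 = 0, so k2 = 1
    have hk2 : k2 = 1 := Nat.coprime_zero_left k2 |>.mp hcop
    subst hk2
    have hglue : NS (glueGens (A : Set ℕ) (B : Set ℕ) 0 1) = NS (B : Set ℕ) := by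
      rw [NS, NS]
      have : glueGens (A : Set ℕ) (B : Set ℕ) 0 1
          = (fun a => 0 * a) '' (A : Set ℕ) ∪ (B : Set ℕ) := by
        rw [glueGens]
        congr 1
        simp
      rw [this, NS_glue_zero_left]
    rw [hglue]
    simp only [Nat.zero_mul, Nat.one_mul, Nat.mul_zero, Nat.zero_add, Nat.add_zero] at *
    calc FB + 1 ≤ B.card * nElt (NS (B : Set ℕ)) FB := hWB
      _ ≤ (A.card + B.card) * nElt (NS (B : Set ℕ)) FB :=
          Nat.mul_le_mul_right _ (by omega)
  rcases Nat.eq_zero_or_pos k2 with rfl | hk2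
  · -- k2 = 0, so k1 = 1
    have hk1' : k1 = 1 := Nat.coprime_zero_right k1 |>.mp hcop
    subst hk1'
    have hglue : NS (glueGens (A : Set ℕ) (B : Set ℕ) 1 0) = NS (A : Set ℕ) := by
      rw [NS, NS]
      have : glueGens (A : Set ℕ) (B : Set ℕ) 1 0
          = (fun b => 0 * b) '' (B : Set ℕ) ∪ (A : Set ℕ) := by
        rw [glueGens, Set.union_comm]
        congr 1
        simp
      rw [this, NS_glue_zero_left]
    rw [hglue]
    simp only [Nat.zero_mul, Nat.one_mul, Nat.mul_zero, Nat.zero_add, Nat.add_zero] at *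
    calc FA + 1 ≤ A.card * nElt (NS (A : Set ℕ)) FA := hWA
      _ ≤ (A.card + B.card) * nElt (NS (A : Set ℕ)) FA :=
          Nat.mul_le_mul_right _ (by omega)
  -- main case
  have h1 := side (A : Set ℕ) (B : Set ℕ) FA FB k1 k2 hFA hFB hcop hk1
  have h2 := side (B : Set ℕ) (A : Set ℕ) FB FA k2 k1 hFB hFA hcop.symm hk2
  have hgcomm : glueGens (B : Set ℕ) (A : Set ℕ) k2 k1
      = glueGens (A : Set ℕ) (B : Set ℕ) k1 k2 := Set.union_comm _ _
  have hFcomm : k2 * FB + k1 * FA + k2 * k1 = k1 * FA + k2 * FB + k1 * k2 := by ring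
  rw [hgcomm, hFcomm] at h2
  have hd1 := sum_div_reflect k1 k2 hk1
  have hd2 := sum_div_reflect k2 k1 hk2
  obtain ⟨a, rfl⟩ : ∃ a, k1 = a + 1 := ⟨k1 - 1, by omega⟩
  obtain ⟨b, rfl⟩ : ∃ b, k2 = b + 1 := ⟨k2 - 1, by omega⟩
  simp only [Nat.add_sub_cancel] at hd1 hd2
  set n := nElt (NS (glueGens (A : Set ℕ) (B : Set ℕ) (a + 1) (b + 1)))
      ((a + 1) * FA + (b + 1) * FB + (a + 1) * (b + 1)) with hn
  set nA := nElt (NS (A : Set ℕ)) FA with hnA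
  set nB := nElt (NS (B : Set ℕ)) FB with hnB
  set D := ∑ s ∈ Finset.range (a + 1), (b + 1) * s / (a + 1) with hDdef
  set D' := ∑ s ∈ Finset.range (b + 1), (a + 1) * s / (b + 1) with hD'def
  set p := A.card with hpdef
  set q := B.card with hqdef
  have hDD : a * b ≤ D + D' := by linarith
  have c1 : p * ((a + 1) * nA + D) ≤ p * n := Nat.mul_le_mul_left _ h1
  have c2 : q * ((b + 1) * nB + D') ≤ q * n := Nat.mul_le_mul_left _ h2
  have c3 : (a + 1) * (FA + 1) ≤ (a + 1) * (p * nA) := Nat.mul_le_mul_left _ hWA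
  have c4 : (b + 1) * (FB + 1) ≤ (b + 1) * (q * nB) := Nat.mul_le_mul_left _ hWB
  have c5 : D ≤ p * D := Nat.le_mul_of_pos_left _ hp
  have c6 : D' ≤ q * D' := Nat.le_mul_of_pos_left _ hq
  show (a + 1) * FA + (b + 1) * FB + (a + 1) * (b + 1) + 1 ≤ (p + q) * n
  nlinarith [c1, c2, c3, c4, c5, c6, hDD]
end

section
/- Let ⟨B⟩ be a numerical semigroup minimally generated by q ≥ 4 elements satisfying q·n_B ≥ F_B + 1, and let k_1, k_2 be coprime with k_1 ∈ ⟨B⟩\B, k_2 ≥ 2, n_B ≥ 1. Then (q+1)(k_2·n_B + (k_1−1)(k_2−1)/4) − k_2·F_B − k_1(k_2−1) > 0. -/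
/-! The inequality is pure arithmetic. Wilf's inequality `q n_B ≥ F_B + 1` for `⟨B⟩` absorbs
`k₂ F_B`, and `q ≥ 4` makes `(q+1)/4 ≥ 5/4`, so the term `(q+1)(k₁−1)(k₂−1)/4` absorbs
`k₁(k₂−1)` up to `k₂ − 1` once `k₁ ≥ 1`, which coprimality with `k₂ ≥ 2` forces. -/

theorem gluing_wilf_expr_pos {K : Type*} [Field K] [LinearOrder K] [IsStrictOrderedRing K]
    {q n F k1 k2 : K} (hq : 4 ≤ q) (hW : F + 1 ≤ q * n) (hn : 0 ≤ n)
    (hk1 : 1 ≤ k1) (hk2 : 1 ≤ k2) :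
    (q + 1) * (k2 * n + (k1 - 1) * (k2 - 1) / 4) - k2 * F - k1 * (k2 - 1) > 0 := by
  have hglue : 5 * ((k1 - 1) * (k2 - 1)) ≤ (q + 1) * ((k1 - 1) * (k2 - 1)) :=
    mul_le_mul_of_nonneg_right (by linarith) (mul_nonneg (by linarith) (by linarith))
  have hwilf : k2 * (F + 1) ≤ k2 * (q * n) := mul_le_mul_of_nonneg_left hW (by linarith)
  have hk1k2 : 0 ≤ (k1 - 1) * (k2 - 1) := mul_nonneg (by linarith) (by linarith)
  have hk2n : 0 ≤ k2 * n := mul_nonneg (by linarith) hn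
  calc (q + 1) * (k2 * n + (k1 - 1) * (k2 - 1) / 4) - k2 * F - k1 * (k2 - 1)
      ≥ k2 * n + k2 + 5 * ((k1 - 1) * (k2 - 1)) / 4 - k1 * (k2 - 1) := by linarith
    _ = k2 * n + 1 + (k1 - 1) * (k2 - 1) / 4 := by ring
    _ > 0 := by linarith

theorem wilf_case_p_one_general (B : Finset ℕ) (FB k1 k2 : ℕ)
    (hq : 4 ≤ B.card)
    (hWB : B.card * nElt (NS (B : Set ℕ)) FB ≥ FB + 1)
    (hk2 : 2 ≤ k2)
    (hcop : Nat.Coprime k1 k2) :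
    ((B.card : ℚ) + 1) * ((k2 : ℚ) * (nElt (NS (B : Set ℕ)) FB : ℚ) +
        ((k1 : ℚ) - 1) * ((k2 : ℚ) - 1) / 4) -
      (k2 : ℚ) * (FB : ℚ) - (k1 : ℚ) * ((k2 : ℚ) - 1) > 0 := by
  have hk1 : 1 ≤ k1 := Nat.one_le_iff_ne_zero.mpr fun h => by
    subst h; rw [Nat.coprime_zero_left] at hcop; omega
  exact gluing_wilf_expr_pos (by exact_mod_cast hq) (by exact_mod_cast hWB) (Nat.cast_nonneg _)
    (by exact_mod_cast hk1) (by exact_mod_cast (by omega : 1 ≤ k2))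

/-- The key inequality in the case `p = 1`, `q ≥ 4`:
`(q+1)(k₂ n_B + (k₁−1)(k₂−1)/4) − k₂ F_B − k₁(k₂−1) > 0`. -/
theorem wilf_case_p_one (B : Finset ℕ) (FB k1 k2 : ℕ)
    (hBmin : MinimallyGenerates (B : Set ℕ))
    (hFB : IsFrobenius (NS (B : Set ℕ)) FB)
    (hq : 4 ≤ B.card)
    (hWB : B.card * nElt (NS (B : Set ℕ)) FB ≥ FB + 1)
    (hk1B : k1 ∈ NS (B : Set ℕ)) (hk1nB : k1 ∉ B)
    (hk2 : 2 ≤ k2) (hnB : 1 ≤ nElt (NS (B : Set ℕ)) FB)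
    (hcop : Nat.Coprime k1 k2) :
    ((B.card : ℚ) + 1) * ((k2 : ℚ) * (nElt (NS (B : Set ℕ)) FB : ℚ) +
        ((k1 : ℚ) - 1) * ((k2 : ℚ) - 1) / 4) -
      (k2 : ℚ) * (FB : ℚ) - (k1 : ℚ) * ((k2 : ℚ) - 1) > 0 :=
  wilf_case_p_one_general B FB k1 k2 hq hWB hk2 hcop
end

section
/- Every numerical semigroup of type t satisfies (t+1)·n_S ≥ F_S + 1, where n_S is the number of elements of S less than the Frobenius number F_S. In particular, every symmetric numerical semigroup satisfies the Wilf inequality. -/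
/-- The set of pseudo-Frobenius elements of `S`; its cardinality is the type of `S`. -/
def pseudoFrobenius (S : AddSubmonoid ℕ) : Set ℕ :=
  {x | x ∉ S ∧ ∀ s ∈ S, s ≠ 0 → x + s ∈ S}

/-!
Every gap `x` of `S` lies below a pseudo-Frobenius element `f` with `f - x ∈ S`: climb from `x`
through gaps `x + s`, `s ∈ S \ {0}`, until no further step stays a gap. For a fixed gap `f`,
`x ↦ f - x` maps the gaps attached to `f` injectively into `{s ∈ S | s < F}`. Hence there are at
most `t · n_S` gaps, while gaps and the `n_S` small elements together fill `{0, …, F}`.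
-/

namespace IsFrobenius

variable {S : AddSubmonoid ℕ} {F : ℕ}

theorem le_of_notMem (hF : IsFrobenius S F) {x : ℕ} (hx : x ∉ S) : x ≤ F :=
  not_lt.1 fun h => hx (hF.2 x h)

theorem finite_gaps (hF : IsFrobenius S F) : {x | x ∉ S}.Finite :=
  (Set.finite_Iic F).subset fun _ => hF.le_of_notMem

theorem ncard_gaps_add_nElt (hF : IsFrobenius S F) :
    {x | x ∉ S}.ncard + nElt S F = F + 1 := by
  have hunion : {x | x ∉ S} ∪ {s | s ∈ S ∧ s < F} = Set.Iic F := by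
    ext x
    by_cases hx : x ∈ S
    · have : x ≠ F := fun h => hF.1 (h ▸ hx)
      simp only [Set.mem_union, Set.mem_ofPred_eq, Set.mem_Iic, hx, not_true_eq_false, true_and,
        false_or]
      omega
    · simp [hx, hF.le_of_notMem hx]
  have hdisj : Disjoint {x | x ∉ S} {s | s ∈ S ∧ s < F} :=
    Set.disjoint_left.2 fun _ hx hs => hx hs.1
  rw [nElt, ← Set.ncard_union_eq hdisj hF.finite_gaps ((Set.finite_Iio F).subset fun _ h => h.2),
    hunion]
  simp

theorem exists_pseudoFrobenius_sub_mem (hF : IsFrobenius S F) {x : ℕ} (hx : x ∉ S) :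
    ∃ f ∈ pseudoFrobenius S, x ≤ f ∧ f - x ∈ S := by
  induction hd : F - x using Nat.strong_induction_on generalizing x with
  | _ d ih =>
    by_cases hpf : ∀ s ∈ S, s ≠ 0 → x + s ∈ S
    · exact ⟨x, ⟨hx, hpf⟩, le_rfl, by simp⟩
    push Not at hpf
    obtain ⟨s, hs, hs0, hxs⟩ := hpf
    have hlt : F - (x + s) < d := by have := hF.le_of_notMem hxs; omega
    obtain ⟨f, hf, hle, hfS⟩ := ih _ hlt hxs rfl
    refine ⟨f, hf, by omega, ?_⟩
    rw [show f - x = f - (x + s) + s by omega]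
    exact S.add_mem hfS hs

theorem ncard_sub_mem_le_nElt (hF : IsFrobenius S F) {f : ℕ} (hf : f ∉ S) :
    {x | x ≤ f ∧ f - x ∈ S}.ncard ≤ nElt S F := by
  have hfF := hF.le_of_notMem hf
  refine Set.ncard_le_ncard_of_injOn (f - ·) (fun x hx => ⟨hx.2, ?_⟩) ?_
    ((Set.finite_Iio F).subset fun _ h => h.2)
  · have : x ≠ 0 := by rintro rfl; exact hf (by simpa using hx.2)
    have := hx.1
    omega
  · intro a ha b hb hab
    have := ha.1; have := hb.1; simp only at hab; omega

theorem ncard_gaps_le (hF : IsFrobenius S F) :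
    {x | x ∉ S}.ncard ≤ (pseudoFrobenius S).ncard * nElt S F := by
  have hPF : (pseudoFrobenius S).Finite := hF.finite_gaps.subset fun _ h => h.1
  have hcover : {x | x ∉ S} ⊆ ⋃ f ∈ hPF.toFinset, {x | x ≤ f ∧ f - x ∈ S} := fun x hx => by
    obtain ⟨f, hf, hxf⟩ := hF.exists_pseudoFrobenius_sub_mem hx
    exact Set.mem_biUnion (hPF.mem_toFinset.2 hf) hxf
  have hfin : (⋃ f ∈ hPF.toFinset, {x | x ≤ f ∧ f - x ∈ S}).Finite :=
    Set.Finite.biUnion (Finset.finite_toSet _) fun f _ => (Set.finite_Iic f).subset fun _ h => h.1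
  calc {x | x ∉ S}.ncard
      ≤ (⋃ f ∈ hPF.toFinset, {x | x ≤ f ∧ f - x ∈ S}).ncard := Set.ncard_le_ncard hcover hfin
    _ ≤ ∑ f ∈ hPF.toFinset, {x | x ≤ f ∧ f - x ∈ S}.ncard := Finset.set_ncard_biUnion_le _ _
    _ ≤ ∑ _f ∈ hPF.toFinset, nElt S F :=
        Finset.sum_le_sum fun f hf => hF.ncard_sub_mem_le_nElt (hPF.mem_toFinset.1 hf).1
    _ = (pseudoFrobenius S).ncard * nElt S F := by
        rw [Finset.sum_const, smul_eq_mul, Set.ncard_eq_toFinset_card _ hPF]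

end IsFrobenius

/-- A numerical semigroup of type `t` satisfies `(t+1)·n_S ≥ F_S + 1`; in particular
symmetric semigroups (type `1`) satisfy the Wilf inequality. -/
theorem type_bound (S : AddSubmonoid ℕ) (F : ℕ) (hF : IsFrobenius S F) :
    ((pseudoFrobenius S).ncard + 1) * nElt S F ≥ F + 1 ∧
    ((pseudoFrobenius S).ncard = 1 → 2 * nElt S F ≥ F + 1) := by
  have hbound : ((pseudoFrobenius S).ncard + 1) * nElt S F ≥ F + 1 := by
    have := hF.ncard_gaps_add_nElt
    have := hF.ncard_gaps_le
    rw [add_one_mul]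
    omega
  refine ⟨hbound, fun htype => ?_⟩
  rwa [htype] at hbound
end

section
/- For n ≥ 2, two generalized numerical semigroups ⟨A⟩, ⟨B⟩ ⊆ ℕ^n cannot be glued: there is no gluing ⟨C⟩ = ⟨A⟩ ⋈ ⟨B⟩ in ℕ^n. -/
/-- Coordinatewise embedding of `ℕⁿ` into `ℤⁿ`. -/
def natVecToZ {n : ℕ} (x : Fin n → ℕ) : Fin n → ℤ := fun i => (x i : ℤ)

/-- `⟨A ⊔ B⟩` is a gluing of `⟨A⟩` and `⟨B⟩`: there is a nonzero `d ∈ ⟨A⟩ ∩ ⟨B⟩` with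
`G(A) ∩ G(B) = ℤd`, where `G(·)` denotes the group generated in `ℤⁿ`. -/
def IsGluing {n : ℕ} (A B : Set (Fin n → ℕ)) : Prop :=
  Disjoint A B ∧ ∃ d : Fin n → ℕ, d ≠ 0 ∧
    d ∈ AddSubmonoid.closure A ∧ d ∈ AddSubmonoid.closure B ∧
    AddSubgroup.closure (natVecToZ '' A) ⊓ AddSubgroup.closure (natVecToZ '' B) =
      AddSubgroup.zmultiples (natVecToZ d)

/-!
A generalized numerical semigroup `⟨A⟩ ⊆ ℕⁿ` contains all large multiples of each unit vector
`eᵢ`, so the group it generates in `ℤⁿ` is all of `ℤⁿ`. Hence for `k₁, k₂ > 0` the groups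
generated by `k₁A` and `k₂B` both contain `k₁k₂ℤⁿ`, a subgroup of rank `n ≥ 2`, whereas a gluing
requires their intersection to be the cyclic group `ℤd`.
-/

open Function Filter

def natVecToZHom (n : ℕ) : (Fin n → ℕ) →+ (Fin n → ℤ) :=
  (Nat.castAddMonoidHom ℤ).compLeft (Fin n)

lemma natVecToZ_image_nsmul {n : ℕ} (k : ℕ) (S : Set (Fin n → ℕ)) :
    natVecToZ '' ((k • ·) '' S) = (k • ·) '' (natVecToZ '' S) :=
  Set.image_comm (map_nsmul (natVecToZHom n) k)

section

variable {M G : Type*} [AddMonoid M] [AddGroup G]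

lemma AddSubmonoid.eventually_nsmul_mem_of_compl_finite {S : AddSubmonoid M}
    (hS : (S : Set M)ᶜ.Finite) {x : M} (hx : Injective fun m : ℕ => m • x) :
    ∀ᶠ m : ℕ in atTop, m • x ∈ S := by
  rw [← Nat.cofinite_eq_atTop]
  filter_upwards [(hS.preimage hx.injOn).eventually_cofinite_notMem] with m hm
  simpa using hm

lemma AddMonoidHom.mem_closure_image_of_mem_mclosure (f : M →+ G) {A : Set M} {x : M}
    (hx : x ∈ AddSubmonoid.closure A) : f x ∈ AddSubgroup.closure (f '' A) := by
  have hle : AddSubmonoid.closure (f '' A) ≤ (AddSubgroup.closure (f '' A)).toAddSubmonoid :=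
    AddSubmonoid.closure_le.mpr AddSubgroup.subset_closure
  exact hle (AddMonoidHom.map_mclosure f A ▸ AddSubmonoid.mem_map_of_mem f hx)

/-- A submonoid with finite complement contains two consecutive multiples of `x`, whose
difference is `x`. -/
lemma AddMonoidHom.mem_closure_image_of_compl_finite (f : M →+ G) {A : Set M}
    (hA : (AddSubmonoid.closure A : Set M)ᶜ.Finite) {x : M}
    (hx : Injective fun m : ℕ => m • x) : f x ∈ AddSubgroup.closure (f '' A) := by
  have h := AddSubmonoid.eventually_nsmul_mem_of_compl_finite hA hx
  obtain ⟨m, hm, hm1⟩ := (h.and (tendsto_add_atTop_nat 1 h)).exists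
  have hdiff : f x = -f (m • x) + f ((m + 1) • x) := by
    rw [succ_nsmul, map_add, neg_add_cancel_left]
  rw [hdiff]
  exact add_mem (neg_mem (f.mem_closure_image_of_mem_mclosure hm))
    (f.mem_closure_image_of_mem_mclosure hm1)

end

lemma closure_range_single_eq_top (n : ℕ) :
    AddSubgroup.closure (Set.range fun i : Fin n => (Pi.single i 1 : Fin n → ℤ)) = ⊤ := by
  have hbasis : ⇑(Pi.basisFun ℤ (Fin n)) = fun i => Pi.single i 1 :=
    funext (Pi.basisFun_apply ℤ (Fin n))
  rw [← Submodule.span_int_eq_addSubgroupClosure, ← hbasis, (Pi.basisFun ℤ (Fin n)).span_eq,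
    Submodule.top_toAddSubgroup]

lemma closure_image_natVecToZ_eq_top {n : ℕ} {A : Set (Fin n → ℕ)}
    (hA : (AddSubmonoid.closure A : Set (Fin n → ℕ))ᶜ.Finite) :
    AddSubgroup.closure (natVecToZ '' A) = ⊤ := by
  rw [eq_top_iff, ← closure_range_single_eq_top n, AddSubgroup.closure_le]
  rintro _ ⟨i, rfl⟩
  have hinj : Injective fun m : ℕ => m • (Pi.single i 1 : Fin n → ℕ) := fun a b hab => by
    simpa using congrFun hab i
  have hsingle : natVecToZ (Pi.single i 1) = Pi.single i 1 := by
    ext j; by_cases hj : j = i <;> simp [natVecToZ, hj]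
  change (Pi.single i 1 : Fin n → ℤ) ∈ _
  rw [← hsingle]
  exact (natVecToZHom n).mem_closure_image_of_compl_finite hA hinj

lemma nsmul_mem_closure_nsmul_image {G : Type*} [AddCommGroup G] {S : Set G}
    (hS : AddSubgroup.closure S = ⊤) (k : ℕ) (v : G) :
    k • v ∈ AddSubgroup.closure ((k • ·) '' S) := by
  change k • v ∈ AddSubgroup.closure (nsmulAddMonoidHom k '' S)
  rw [← AddMonoidHom.map_closure, hS]
  exact ⟨v, trivial, rfl⟩

lemma not_forall_nsmul_mem_zmultiples {n : ℕ} (hn : 2 ≤ n) {c : ℕ} (hc : c ≠ 0)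
    (v : Fin n → ℤ) : ¬ ∀ w : Fin n → ℤ, c • w ∈ AddSubgroup.zmultiples v := by
  intro h
  let i : Fin n := ⟨0, by omega⟩
  let j : Fin n := ⟨1, by omega⟩
  have hij : j ≠ i := by simp [i, j, Fin.ext_iff]
  obtain ⟨a, ha⟩ := h (Pi.single i 1)
  obtain ⟨b, hb⟩ := h (Pi.single j 1)
  have hai := congrFun ha i
  have haj := congrFun ha j
  have hbj := congrFun hb j
  simp only [Pi.smul_apply, Int.zsmul_eq_mul, Pi.single_eq_same, Int.nsmul_eq_mul, mul_one, ne_eq,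
    hij, not_false_eq_true, Pi.single_eq_of_ne, nsmul_zero, mul_eq_zero] at hai haj hbj
  have hc' : (c : ℤ) ≠ 0 := by exact_mod_cast hc
  rcases haj with rfl | hvj
  · exact hc' (by simpa using hai.symm)
  · exact hc' (by simpa [hvj] using hbj.symm)

/-- For `n ≥ 2`, two generalized numerical semigroups in `ℕⁿ` cannot be glued. -/
theorem no_gluing_of_gns {n : ℕ} (hn : 2 ≤ n) (A B : Set (Fin n → ℕ))
    (hA : ((AddSubmonoid.closure A : Set (Fin n → ℕ)))ᶜ.Finite)
    (hB : ((AddSubmonoid.closure B : Set (Fin n → ℕ)))ᶜ.Finite) :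
    ∀ k1 k2 : ℕ, 0 < k1 → 0 < k2 →
      ¬ IsGluing ((fun v => k1 • v) '' A) ((fun v => k2 • v) '' B) := by
  rintro k1 k2 hk1 hk2 ⟨-, d, -, -, -, hinter⟩
  refine not_forall_nsmul_mem_zmultiples hn (Nat.mul_ne_zero hk1.ne' hk2.ne') (natVecToZ d)
    fun w => ?_
  rw [← hinter, natVecToZ_image_nsmul, natVecToZ_image_nsmul]
  constructor
  · rw [mul_comm, mul_nsmul]
    exact nsmul_mem_closure_nsmul_image (closure_image_natVecToZ_eq_top hA) k1 _
  · rw [mul_nsmul]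
    exact nsmul_mem_closure_nsmul_image (closure_image_natVecToZ_eq_top hB) k2 _
end

section
/- With notation as in the higher-dimensional gluing (C = k_1A ∪ k_2B, B = {u_1b,...,u_qb}, b ∈ ⟨A⟩ with gcd of coordinates 1, k_1 ∈ ⟨u_1,...,u_q⟩, A a 𝒞-semigroup with Frobenius element F(A) with respect to a monomial order ≺): the element k_1·F(A) does not belong to ⟨C⟩, and k_1·F(A) ∈ ℋ(C). -/
/-- Coordinatewise embedding of `ℕⁿ` into `ℚⁿ`. -/
def toQ {n : ℕ} (x : Fin n → ℕ) : Fin n → ℚ := fun i => (x i : ℚ)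

/-- The affine semigroup generated by a family of elements of `ℕⁿ`. -/
def sg {n : ℕ} {ι : Type} (a : ι → Fin n → ℕ) : AddSubmonoid (Fin n → ℕ) :=
  AddSubmonoid.closure (Set.range a)

/-- The rational cone generated by a finite family in `ℕⁿ`. -/
def coneOf {n : ℕ} {ι : Type} [Fintype ι] (a : ι → Fin n → ℕ) : Set (Fin n → ℚ) :=
  {x | ∃ c : ι → ℚ, (∀ i, 0 ≤ c i) ∧ x = ∑ i, c i • toQ (a i)}

/-- `ℋ(S) = (cone(S) \ S) ∩ ℕⁿ`, the gap set of a `𝒞`-semigroup. -/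
def HSet {n : ℕ} {ι : Type} [Fintype ι] (a : ι → Fin n → ℕ) : Set (Fin n → ℕ) :=
  {x | toQ x ∈ coneOf a ∧ x ∉ sg a}

/-- The generating family `k₁A ⊔ k₂B` of the gluing, where `B = {u₁b, …, u_q b}`. -/
def glueFam {n p q : ℕ} (a : Fin p → Fin n → ℕ) (u : Fin q → ℕ) (b : Fin n → ℕ)
    (k1 k2 : ℕ) : (Fin p ⊕ Fin q) → Fin n → ℕ :=
  Sum.elim (fun i => k1 • a i) (fun j => (k2 * u j) • b)

theorem not_in_sgC {n p q : ℕ} (a : Fin p → Fin n → ℕ)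
    (b : Fin n → ℕ) (hb : b ∈ sg a) (hbg : Finset.univ.gcd b = 1)
    (u : Fin q → ℕ) (k1 k2 : ℕ) (hk1pos : 0 < k1)
    (FA : Fin n → ℕ) (hFA : FA ∉ sg a) :
    k1 • FA ∉ sg (glueFam a u b k1 k2) := by
  intro h
  have hsplit : sg (glueFam a u b k1 k2) ≤
      (sg a).map (nsmulAddMonoidHom k1 : (Fin n → ℕ) →+ (Fin n → ℕ)) ⊔
      AddSubmonoid.closure {b} := by
    rw [sg, glueFam, Set.Sum.elim_range]
    apply AddSubmonoid.closure_le.2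
    rintro z (⟨i, rfl⟩ | ⟨j, rfl⟩)
    · exact AddSubmonoid.mem_sup_left (AddSubmonoid.mem_map_of_mem _
        (AddSubmonoid.subset_closure ⟨i, rfl⟩))
    · exact AddSubmonoid.mem_sup_right
        ((AddSubmonoid.mem_closure_singleton).2 ⟨k2 * u j, rfl⟩)
  obtain ⟨y, hy, z, hz, heq⟩ := AddSubmonoid.mem_sup.1 (hsplit h)
  obtain ⟨x, hx, rfl⟩ := hy
  obtain ⟨m, rfl⟩ := AddSubmonoid.mem_closure_singleton.1 hz
  simp only [nsmulAddMonoidHom_apply] at heq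
  have hdvd : ∀ i, k1 ∣ m * b i := by
    intro i
    have h1 := congrFun heq.symm i
    simp only [Pi.add_apply, Pi.smul_apply, smul_eq_mul] at h1
    have h2 : m * b i = k1 * FA i - k1 * x i := by omega
    exact h2 ▸ Nat.dvd_sub ⟨FA i, rfl⟩ ⟨x i, rfl⟩
  have hgcd : k1 ∣ m := by
    have hd := Finset.dvd_gcd (fun i (_ : i ∈ Finset.univ) => hdvd i)
    rw [Finset.gcd_mul_left, hbg, mul_one] at hd
    simpa using hd
  obtain ⟨t, rfl⟩ := hgcd
  rw [mul_smul, ← smul_add] at heq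
  have hFAeq : FA = x + t • b := by
    funext i
    have h1 := congrFun heq i
    simp only [Pi.add_apply, Pi.smul_apply, smul_eq_mul] at h1
    exact Nat.eq_of_mul_eq_mul_left hk1pos h1.symm
  exact hFA (hFAeq ▸ add_mem hx (nsmul_mem hb t))


/-- In the higher-dimensional gluing, `k₁·F(A)` is not in `⟨C⟩`, and moreover
`k₁·F(A) ∈ ℋ(C)`. -/
theorem k1_frobenius_gap {n p q : ℕ} (a : Fin p → Fin n → ℕ)
    (hnd : Submodule.span ℚ (Set.range fun i => toQ (a i)) = ⊤)
    (hfin : (HSet a).Finite)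
    (b : Fin n → ℕ) (hb : b ∈ sg a) (hbg : Finset.univ.gcd b = 1)
    (u : Fin q → ℕ) (hug : Finset.univ.gcd u = 1)
    (k1 k2 : ℕ) (hk1pos : 0 < k1) (hk2pos : 0 < k2)
    (hk1 : k1 ∈ AddSubmonoid.closure (Set.range u))
    (prec : (Fin n → ℕ) → (Fin n → ℕ) → Prop)
    (FA : Fin n → ℕ) (hFAmem : FA ∈ HSet a)
    (hFAmax : ∀ y ∈ HSet a, y ≠ FA → prec y FA) :
    k1 • FA ∉ sg (glueFam a u b k1 k2) ∧ k1 • FA ∈ HSet (glueFam a u b k1 k2) := by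
  have hnot := not_in_sgC a b hb hbg u k1 k2 hk1pos FA hFAmem.2
  refine ⟨hnot, ?_, hnot⟩
  obtain ⟨c, hc, hsum⟩ := hFAmem.1
  refine ⟨Sum.elim c 0, ?_, ?_⟩
  · rintro (i | j)
    · exact hc i
    · exact le_refl 0
  · rw [Fintype.sum_sum_type]
    simp only [Sum.elim_inl, Sum.elim_inr, Pi.zero_apply, zero_smul, Finset.sum_const_zero,
      add_zero, glueFam]
    have : toQ (k1 • FA) = (k1 : ℚ) • toQ FA := by
      funext i; simp [toQ, mul_comm]
    rw [this, hsum, Finset.smul_sum]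
    refine Finset.sum_congr rfl fun i _ => ?_
    have : toQ (k1 • a i) = (k1 : ℚ) • toQ (a i) := by
      funext j; simp [toQ, mul_comm]
    rw [this, smul_comm]
end
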